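/- arXiv:2207.09262 — 5 statements merged into one kernel-verified Lean document; each statement's English description precedes it below -/
import Mathlib

section
/- Let G be a graph on n vertices admitting a perfect elimination ordering σ, and let P = (v_1, v_2, …, v_k) be a sequence of vertices inducing a simple (chordless) path in G with endpoints v_1 and v_k. Then for every internal index i with 2 ≤ i ≤ k − 1, σ(v_i) > min{σ(v_1), σ(v_k)}. -/
open SimpleGraph

variable {V : Type*}

/-- `f : ZMod n → V` enumerates the vertices of an induced (chordless) cycle of length `n`:
it is injective and two listed vertices are adjacent iff they are consecutive on the cycle. -/
def IsInducedCycle (G : SimpleGraph V) {n : ℕ} (f : ZMod n → V) : Prop :=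
  Function.Injective f ∧
    ∀ i j : ZMod n, G.Adj (f i) (f j) ↔ (j = i + 1 ∨ i = j + 1)

/-- A graph is chordal if it has no induced cycle of length at least 4. -/
def Chordal (G : SimpleGraph V) : Prop :=
  ∀ n : ℕ, 4 ≤ n → ∀ f : ZMod n → V, ¬ IsInducedCycle G f

/-- A hole is an induced chordless cycle of length at least 5. -/
def HasHole (G : SimpleGraph V) : Prop :=
  ∃ (n : ℕ) (f : ZMod n → V), 5 ≤ n ∧ IsInducedCycle G f

/-- A house: an induced 4-cycle together with a fifth vertex adjacent to exactly two
adjacent vertices of the 4-cycle (as an induced subgraph). -/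
def HasHouse (G : SimpleGraph V) : Prop :=
  ∃ (f : ZMod 4 → V) (e : V), IsInducedCycle G f ∧ (∀ i, e ≠ f i) ∧
    G.Adj e (f 0) ∧ G.Adj e (f 1) ∧ ¬ G.Adj e (f 2) ∧ ¬ G.Adj e (f 3)

/-- `s` is the vertex set of an induced 4-cycle of `G`. -/
def IsC4Set (G : SimpleGraph V) (s : Set V) : Prop :=
  ∃ f : ZMod 4 → V, IsInducedCycle G f ∧ s = Set.range f

/-- Almost-chordal: no hole, no induced house, and any two distinct induced 4-cycles
share at most one vertex. -/
def AlmostChordal (G : SimpleGraph V) : Prop :=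
  ¬ HasHole G ∧ ¬ HasHouse G ∧
    ∀ s t : Set V, IsC4Set G s → IsC4Set G t → s ≠ t → (s ∩ t).Subsingleton

/-- `G` is `k`-connected: more than `k` vertices, and removing fewer than `k` vertices
leaves it connected. -/
def KConnected {W : Type*} [Fintype W] (k : ℕ) (G : SimpleGraph W) : Prop :=
  k < Fintype.card W ∧
    ∀ S : Finset W, S.card < k → (G.induce ((↑S : Set W)ᶜ)).Connected

/-- The contraction `G/uv`: `v` is removed and merged into `u`, whose new neighbourhood is
`(N(u) ∪ N(v)) \ {u, v}`. -/
def contractEdge (G : SimpleGraph V) (u v : V) : SimpleGraph {x : V // x ≠ v} :=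
  SimpleGraph.fromRel fun a b =>
    G.Adj a.1 b.1 ∨ (a.1 = u ∧ G.Adj v b.1) ∨ (b.1 = u ∧ G.Adj v a.1)

/-- `S` is a separator: its removal disconnects `G`. -/
def IsSeparator (G : SimpleGraph V) (S : Finset V) : Prop :=
  ¬ (G.induce ((↑S : Set V)ᶜ)).Preconnected

/-- `S` is a minimal separator: it is a separator and removing any set of fewer than `|S|`
vertices leaves `G` connected. -/
def IsMinimalSeparator (G : SimpleGraph V) (S : Finset V) : Prop :=
  IsSeparator G S ∧
    ∀ S' : Finset V, S'.card < S.card → (G.induce ((↑S' : Set V)ᶜ)).Connected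

/-- In a perfect elimination ordering, every internal vertex of an induced path has a
larger value than the minimum of the values of the two endpoints (STATEMENT 4). -/
theorem peo_induced_path [Fintype V]
    (G : SimpleGraph V) (σ : V ≃ Fin (Fintype.card V))
    (hpeo : ∀ v : V, G.IsClique {u : V | G.Adj v u ∧ σ v < σ u})
    {m : ℕ} (hm : 0 < m) (p : Fin m → V)
    (hinj : Function.Injective p)
    (hpath : ∀ i j : Fin m,
      G.Adj (p i) (p j) ↔ ((i : ℕ) + 1 = (j : ℕ) ∨ (j : ℕ) + 1 = (i : ℕ))) :
    ∀ i : Fin m, 1 ≤ (i : ℕ) → (i : ℕ) + 1 < m →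
      min (σ (p ⟨0, hm⟩)) (σ (p ⟨m - 1, by omega⟩)) < σ (p i) := by
  intro i hi1 hi2
  haveI : Nonempty (Fin m) := ⟨⟨0, hm⟩⟩
  obtain ⟨j, hj⟩ := Finite.exists_min (fun k : Fin m => σ (p k))
  have hσinj : ∀ a b : Fin m, σ (p a) = σ (p b) → a = b :=
    fun a b h => hinj (σ.injective h)
  have hjend : (j : ℕ) = 0 ∨ (j : ℕ) = m - 1 := by
    by_contra h
    push_neg at h
    have h1 : 1 ≤ (j : ℕ) := by omega
    have h2 : (j : ℕ) + 1 < m := by have := j.isLt; omega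
    set a : Fin m := ⟨(j : ℕ) - 1, by omega⟩ with ha
    set b : Fin m := ⟨(j : ℕ) + 1, h2⟩ with hb
    have hadja : G.Adj (p j) (p a) := by
      rw [hpath]; right; simp only [ha]; omega
    have hadjb : G.Adj (p j) (p b) := by
      rw [hpath]; left; simp only [hb]
    have hlta : σ (p j) < σ (p a) :=
      lt_of_le_of_ne (hj a) fun hh => by
        have := hσinj _ _ hh
        apply_fun (Fin.val) at this
        simp only [ha] at this; omega
    have hltb : σ (p j) < σ (p b) :=
      lt_of_le_of_ne (hj b) fun hh => by
        have := hσinj _ _ hh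
        apply_fun (Fin.val) at this
        simp only [hb] at this; omega
    have hne : p a ≠ p b := fun hh => by
      have := hinj hh
      apply_fun (Fin.val) at this
      simp only [ha, hb] at this; omega
    have hadj : G.Adj (p a) (p b) :=
      hpeo (p j) ⟨hadja, hlta⟩ ⟨hadjb, hltb⟩ hne
    rw [hpath] at hadj
    simp only [ha, hb] at hadj
    omega
  have hij : i ≠ j := fun hh => by
    apply_fun (Fin.val) at hh
    have := j.isLt
    omega
  have hlt : σ (p j) < σ (p i) :=
    lt_of_le_of_ne (hj i) fun hh => hij (hσinj _ _ hh).symm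
  rcases hjend with hj0 | hjm
  · have : j = ⟨0, hm⟩ := Fin.ext hj0
    calc min (σ (p ⟨0, hm⟩)) (σ (p ⟨m - 1, by omega⟩)) ≤ σ (p ⟨0, hm⟩) := min_le_left _ _
      _ < σ (p i) := this ▸ hlt
  · have : j = ⟨m - 1, by omega⟩ := Fin.ext hjm
    calc min (σ (p ⟨0, hm⟩)) (σ (p ⟨m - 1, by omega⟩)) ≤ σ (p ⟨m - 1, by omega⟩) :=
        min_le_right _ _
      _ < σ (p i) := this ▸ hlt
end

section
/- Let G be an almost-chordal graph and let C be the vertex set of an induced 4-cycle in G. Then (i) every vertex v ∈ V(G) \ C that is adjacent to at least two vertices of C is adjacent to all four vertices of C, and (ii) the set of vertices of V(G) \ C that are adjacent to all four vertices of C induces a clique in G. -/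
open SimpleGraph

variable {V : Type*}

section Aux

variable {V : Type*} {G : SimpleGraph V} {f : ZMod 4 → V}

private lemma zmod4_cases (i : ZMod 4) : i = 0 ∨ i = 1 ∨ i = 2 ∨ i = 3 := by revert i; decide

private lemma self_ne_add (i : ZMod 4) {a : ZMod 4} (ha : a ≠ 0) : i ≠ i + a :=
  fun h => ha ((add_left_cancel (show i + 0 = i + a by rw [add_zero]; exact h)).symm)

private lemma fne (hf : IsInducedCycle G f) {i j : ZMod 4} (h : i ≠ j) : f i ≠ f j :=
  fun e => h (hf.1 e)

private lemma adj_succ (hf : IsInducedCycle G f) (i : ZMod 4) : G.Adj (f i) (f (i + 1)) :=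
  (hf.2 i (i + 1)).2 (Or.inl rfl)

private lemma nonadj_opp (hf : IsInducedCycle G f) (i : ZMod 4) : ¬ G.Adj (f i) (f (i + 2)) := by
  rw [hf.2]
  rintro (h | h)
  · exact absurd (add_left_cancel h) (by decide)
  · have h' : i + 0 = i + (2 + 1) := by rw [add_zero, ← add_assoc]; exact h
    exact absurd (add_left_cancel h') (by decide)

private lemma mkC4 (G : SimpleGraph V) (a b c d : V)
    (hab : G.Adj a b) (hbc : G.Adj b c) (hcd : G.Adj c d) (hda : G.Adj d a)
    (hac : ¬ G.Adj a c) (hbd : ¬ G.Adj b d)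
    (nac : a ≠ c) (nbd : b ≠ d) :
    IsInducedCycle G
      (fun m : ZMod 4 => if m = 0 then a else if m = 1 then b else if m = 2 then c else d) := by
  set g := (fun m : ZMod 4 => if m = 0 then a else if m = 1 then b else if m = 2 then c else d)
    with hg
  have g0 : g 0 = a := rfl
  have g1 : g 1 = b := rfl
  have g2 : g 2 = c := rfl
  have g3 : g 3 = d := rfl
  have nab : a ≠ b := hab.ne
  have nbc : b ≠ c := hbc.ne
  have ncd : c ≠ d := hcd.ne
  have nad : a ≠ d := fun h => hda.ne h.symm
  constructor
  · intro x y h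
    rcases zmod4_cases x with rfl|rfl|rfl|rfl <;> rcases zmod4_cases y with rfl|rfl|rfl|rfl <;>
      simp only [g0, g1, g2, g3] at h <;>
      first
        | rfl
        | exact absurd h nab | exact absurd h.symm nab
        | exact absurd h nac | exact absurd h.symm nac
        | exact absurd h nad | exact absurd h.symm nad
        | exact absurd h nbc | exact absurd h.symm nbc
        | exact absurd h nbd | exact absurd h.symm nbd
        | exact absurd h ncd | exact absurd h.symm ncd
  · intro i j
    rcases zmod4_cases i with rfl|rfl|rfl|rfl <;> rcases zmod4_cases j with rfl|rfl|rfl|rfl <;>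
      simp only [g0, g1, g2, g3] <;>
      first
        | exact iff_of_true hab (by decide) | exact iff_of_true hab.symm (by decide)
        | exact iff_of_true hbc (by decide) | exact iff_of_true hbc.symm (by decide)
        | exact iff_of_true hcd (by decide) | exact iff_of_true hcd.symm (by decide)
        | exact iff_of_true hda (by decide) | exact iff_of_true hda.symm (by decide)
        | exact iff_of_false hac (by decide)
        | exact iff_of_false (fun h => hac h.symm) (by decide)
        | exact iff_of_false hbd (by decide)
        | exact iff_of_false (fun h => hbd h.symm) (by decide)
        | exact iff_of_false (G.irrefl) (by decide)

private lemma rotC4 (hf : IsInducedCycle G f) (k : ZMod 4) :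
    IsInducedCycle G (fun m : ZMod 4 => f (m + k)) := by
  constructor
  · intro x y h
    exact add_right_cancel (hf.1 h)
  · intro i j
    have h1 : (j + k = i + k + 1) ↔ (j = i + 1) := by
      rw [add_right_comm]; exact add_left_inj k
    have h2 : (i + k = j + k + 1) ↔ (i = j + 1) := by
      rw [add_right_comm]; exact add_left_inj k
    rw [hf.2, h1, h2]

/-- If `v` outside the 4-cycle is adjacent to two opposite vertices `f i`, `f (i+2)`,
then it is adjacent to `f (i+1)`. -/
private lemma opp (hG : AlmostChordal G) (hf : IsInducedCycle G f)
    {v : V} (hv : v ∉ Set.range f) {i : ZMod 4}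
    (h0 : G.Adj v (f i)) (h2 : G.Adj v (f (i + 2))) : G.Adj v (f (i + 1)) := by
  by_contra h1
  have hcyc := mkC4 G v (f i) (f (i + 1)) (f (i + 2)) h0 (adj_succ hf i)
    (by have := adj_succ hf (i + 1); rwa [add_assoc] at this) h2.symm h1 (nonadj_opp hf i)
    (fun h => hv ⟨i + 1, h.symm⟩) (fne hf (self_ne_add i (by decide)))
  set g := (fun m : ZMod 4 =>
    if m = 0 then v else if m = 1 then f i else if m = 2 then f (i + 1) else f (i + 2)) with hg
  have hne : Set.range f ≠ Set.range g := fun h => hv (by rw [h]; exact ⟨0, rfl⟩)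
  have hsub := hG.2.2 _ _ ⟨f, hf, rfl⟩ ⟨g, hcyc, rfl⟩ hne
  have e1 : f i ∈ Set.range f ∩ Set.range g := ⟨⟨i, rfl⟩, ⟨1, rfl⟩⟩
  have e2 : f (i + 1) ∈ Set.range f ∩ Set.range g := ⟨⟨i + 1, rfl⟩, ⟨2, rfl⟩⟩
  exact fne hf (self_ne_add i (by decide)) (hsub e1 e2)

/-- If `v` outside the 4-cycle is adjacent to two consecutive vertices, it is also adjacent
to one of the other two. -/
private lemma house (hG : AlmostChordal G) (hf : IsInducedCycle G f)
    {v : V} (hv : v ∉ Set.range f) (k : ZMod 4)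
    (h0 : G.Adj v (f k)) (h1 : G.Adj v (f (k + 1))) :
    G.Adj v (f (k + 2)) ∨ G.Adj v (f (k + 3)) := by
  by_contra hcon
  push_neg at hcon
  obtain ⟨h2, h3⟩ := hcon
  apply hG.2.1
  refine ⟨fun m : ZMod 4 => f (m + k), v, rotC4 hf k, fun i h => hv ⟨i + k, h.symm⟩, ?_, ?_, ?_, ?_⟩
  · show G.Adj v (f (0 + k)); rwa [zero_add]
  · show G.Adj v (f (1 + k)); rwa [add_comm]
  · show ¬ G.Adj v (f (2 + k)); rwa [add_comm]
  · show ¬ G.Adj v (f (3 + k)); rwa [add_comm]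

/-- If `v` outside the 4-cycle is adjacent to two opposite vertices, it is adjacent to all. -/
private lemma allFour (hG : AlmostChordal G) (hf : IsInducedCycle G f)
    {v : V} (hv : v ∉ Set.range f) {i : ZMod 4}
    (h0 : G.Adj v (f i)) (h2 : G.Adj v (f (i + 2))) : ∀ m : ZMod 4, G.Adj v (f m) := by
  have h1 : G.Adj v (f (i + 1)) := opp hG hf hv h0 h2
  have e : i + 2 + 2 = i := by
    rw [add_assoc, show (2 + 2 : ZMod 4) = 0 from rfl, add_zero]
  have h3' : G.Adj v (f (i + 2 + 1)) := opp hG hf hv h2 (e.symm ▸ h0)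
  have h3 : G.Adj v (f (i + 3)) := by
    rwa [add_assoc, show (2 + 1 : ZMod 4) = 3 from rfl] at h3'
  intro m
  have hm : m = i + (m - i) := by ring
  rcases zmod4_cases (m - i) with h|h|h|h <;> rw [hm, h]
  · rw [add_zero]; exact h0
  · exact h1
  · exact h2
  · exact h3

end Aux

/-- In an almost-chordal graph, a vertex outside an induced 4-cycle which is adjacent to two
of its vertices is universal to it, and the universal vertices form a clique (STATEMENT 5). -/
theorem almost_chordal_universal_to_C4
    (G : SimpleGraph V) (hG : AlmostChordal G)
    (f : ZMod 4 → V) (hf : IsInducedCycle G f) :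
    (∀ v : V, v ∉ Set.range f →
      (∃ i j : ZMod 4, i ≠ j ∧ G.Adj v (f i) ∧ G.Adj v (f j)) →
      ∀ i : ZMod 4, G.Adj v (f i)) ∧
    G.IsClique {v : V | v ∉ Set.range f ∧ ∀ i : ZMod 4, G.Adj v (f i)} := by
  constructor
  · rintro v hv ⟨i, j, hij, hvi, hvj⟩
    have hm : j = i + (j - i) := by ring
    rcases zmod4_cases (j - i) with h|h|h|h
    · exact absurd (by rw [hm, h, add_zero] : j = i) hij.symm
    · rw [hm, h] at hvj
      rcases house hG hf hv i hvi hvj with h2|h3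
      · exact allFour hG hf hv hvi h2
      · have h2' : G.Adj v (f (i + 1 + 2)) := by
          rwa [add_assoc, show (1 + 2 : ZMod 4) = 3 from rfl]
        exact allFour hG hf hv hvj h2'
    · rw [hm, h] at hvj
      exact allFour hG hf hv hvi hvj
    · rw [hm, h] at hvj
      have hvj1 : G.Adj v (f (i + 3 + 1)) := by
        rwa [add_assoc, show (3 + 1 : ZMod 4) = 0 from rfl, add_zero]
      rcases house hG hf hv (i + 3) hvj hvj1 with h2|h3
      · exact allFour hG hf hv hvj h2
      · have h2' : G.Adj v (f (i + 2)) := by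
          rwa [add_assoc, show (3 + 3 : ZMod 4) = 2 from rfl] at h3
        exact allFour hG hf hv hvi h2'
  · intro v hv w hw hvw
    by_contra hadj
    obtain ⟨hvr, hvall⟩ := hv
    obtain ⟨hwr, hwall⟩ := hw
    have n02 : ¬ G.Adj (f 0) (f 2) := by
      have := nonadj_opp hf 0; rwa [zero_add] at this
    have n13 : ¬ G.Adj (f 1) (f 3) := by
      have := nonadj_opp hf 1; rwa [show (1 + 2 : ZMod 4) = 3 from rfl] at this
    have c1 := mkC4 G v (f 0) w (f 2) (hvall 0) (hwall 0).symm (hwall 2) (hvall 2).symm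
      hadj n02 hvw (fne hf (by decide))
    have c2 := mkC4 G v (f 1) w (f 3) (hvall 1) (hwall 1).symm (hwall 3) (hvall 3).symm
      hadj n13 hvw (fne hf (by decide))
    set g1 := (fun m : ZMod 4 => if m = 0 then v else if m = 1 then f 0 else if m = 2 then w else f 2)
      with hg1
    set g2 := (fun m : ZMod 4 => if m = 0 then v else if m = 1 then f 1 else if m = 2 then w else f 3)
      with hg2
    have hmem : f 0 ∈ Set.range g1 := ⟨1, rfl⟩
    have hnmem : f 0 ∉ Set.range g2 := by
      rintro ⟨m, hmeq⟩
      rcases zmod4_cases m with rfl|rfl|rfl|rfl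
      · exact hvr ⟨0, (show v = f 0 from hmeq).symm⟩
      · exact fne hf (show (1 : ZMod 4) ≠ 0 by decide) hmeq
      · exact hwr ⟨0, (show w = f 0 from hmeq).symm⟩
      · exact fne hf (show (3 : ZMod 4) ≠ 0 by decide) hmeq
    have hne : Set.range g1 ≠ Set.range g2 := fun h => hnmem (h ▸ hmem)
    have hsub := hG.2.2 _ _ ⟨g1, c1, rfl⟩ ⟨g2, c2, rfl⟩ hne
    exact hvw (hsub ⟨⟨0, rfl⟩, ⟨0, rfl⟩⟩ ⟨⟨2, rfl⟩, ⟨2, rfl⟩⟩)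
end

section
/- Let G be an almost-chordal graph. If G contains a double house as a subgraph (not necessarily induced), then at least one of the two 4-cycles of the double house has a chord in G, i.e., the two 4-cycles of the double house cannot both be induced 4-cycles of G. -/
open SimpleGraph

variable {V : Type*}

private lemma dh_zmod4_cases : ∀ i : ZMod 4, i = 0 ∨ i = 1 ∨ i = 2 ∨ i = 3 := by decide

private lemma dh_c4cycle (G : SimpleGraph V) (a b c d : V)
    (hab : a ≠ b) (hac : a ≠ c) (had : a ≠ d) (hbc : b ≠ c) (hbd : b ≠ d) (hcd : c ≠ d)
    (eab : G.Adj a b) (ebc : G.Adj b c) (ecd : G.Adj c d) (eda : G.Adj d a)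
    (nac : ¬ G.Adj a c) (nbd : ¬ G.Adj b d) :
    @IsInducedCycle V G 4 ![a,b,c,d] := by
  have eba := eab.symm; have ecb := ebc.symm; have edc := ecd.symm; have ead := eda.symm
  have nca : ¬ G.Adj c a := fun h => nac h.symm
  have ndb : ¬ G.Adj d b := fun h => nbd h.symm
  have h0 : (![a,b,c,d] : Fin 4 → V) (0 : ZMod 4) = a := rfl
  have h1 : (![a,b,c,d] : Fin 4 → V) (1 : ZMod 4) = b := rfl
  have h2 : (![a,b,c,d] : Fin 4 → V) (2 : ZMod 4) = c := rfl
  have h3 : (![a,b,c,d] : Fin 4 → V) (3 : ZMod 4) = d := rfl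
  constructor
  · intro i j h
    rcases dh_zmod4_cases i with rfl|rfl|rfl|rfl <;> rcases dh_zmod4_cases j with rfl|rfl|rfl|rfl <;>
      simp only [h0, h1, h2, h3] at h <;>
      first
        | rfl
        | exact absurd h (by assumption)
        | exact absurd h.symm (by assumption)
  · intro i j
    rcases dh_zmod4_cases i with rfl|rfl|rfl|rfl <;> rcases dh_zmod4_cases j with rfl|rfl|rfl|rfl <;>
      simp only [h0, h1, h2, h3] <;>
      first
        | exact iff_of_true (by assumption) (by decide)
        | exact iff_of_false (by assumption) (by decide)
        | exact iff_of_false (G.irrefl) (by decide)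

private lemma dh_c4set (G : SimpleGraph V) (a b c d : V)
    (hab : a ≠ b) (hac : a ≠ c) (had : a ≠ d) (hbc : b ≠ c) (hbd : b ≠ d) (hcd : c ≠ d)
    (eab : G.Adj a b) (ebc : G.Adj b c) (ecd : G.Adj c d) (eda : G.Adj d a)
    (nac : ¬ G.Adj a c) (nbd : ¬ G.Adj b d) :
    IsC4Set G {a, b, c, d} := by
  refine ⟨![a,b,c,d], dh_c4cycle G a b c d hab hac had hbc hbd hcd eab ebc ecd eda nac nbd, ?_⟩
  ext x
  constructor
  · rintro (rfl | rfl | rfl | rfl)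
    · exact ⟨(0 : ZMod 4), rfl⟩
    · exact ⟨(1 : ZMod 4), rfl⟩
    · exact ⟨(2 : ZMod 4), rfl⟩
    · exact ⟨(3 : ZMod 4), rfl⟩
  · rintro ⟨i, rfl⟩
    rcases dh_zmod4_cases i with rfl|rfl|rfl|rfl
    · exact Or.inl rfl
    · exact Or.inr (Or.inl rfl)
    · exact Or.inr (Or.inr (Or.inl rfl))
    · exact Or.inr (Or.inr (Or.inr rfl))

private lemma dh_house (G : SimpleGraph V) (a b c d e : V)
    (hab : a ≠ b) (hac : a ≠ c) (had : a ≠ d) (hbc : b ≠ c) (hbd : b ≠ d) (hcd : c ≠ d)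
    (eab : G.Adj a b) (ebc : G.Adj b c) (ecd : G.Adj c d) (eda : G.Adj d a)
    (nac : ¬ G.Adj a c) (nbd : ¬ G.Adj b d)
    (hea : e ≠ a) (heb : e ≠ b) (hec : e ≠ c) (hed : e ≠ d)
    (aea : G.Adj e a) (aeb : G.Adj e b) (nec : ¬ G.Adj e c) (ned : ¬ G.Adj e d) :
    HasHouse G := by
  refine ⟨![a,b,c,d], e,
    dh_c4cycle G a b c d hab hac had hbc hbd hcd eab ebc ecd eda nac nbd, ?_, aea, aeb, nec, ned⟩
  intro i
  rcases dh_zmod4_cases i with rfl|rfl|rfl|rfl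
  · exact hea
  · exact heb
  · exact hec
  · exact hed

private lemma dh_two_c4 (G : SimpleGraph V) (hG : AlmostChordal G) (s t : Set V)
    (hs : IsC4Set G s) (ht : IsC4Set G t) (hst : s ≠ t) (x y : V)
    (hxs : x ∈ s) (hxt : x ∈ t) (hys : y ∈ s) (hyt : y ∈ t) (hxy : x ≠ y) : False :=
  hxy (hG.2.2 s t hs ht hst ⟨hxs, hxt⟩ ⟨hys, hyt⟩)

/-- If an almost-chordal graph contains a double house as a (not necessarily induced)
subgraph, then one of its two 4-cycles has a chord (STATEMENT 6). -/
theorem almost_chordal_double_house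
    (G : SimpleGraph V) (hG : AlmostChordal G)
    (u b₁ c₁ d₁ b₂ c₂ d₂ : V)
    (hdist : ([u, b₁, c₁, d₁, b₂, c₂, d₂] : List V).Pairwise (· ≠ ·))
    (e₁ : G.Adj u b₁) (e₂ : G.Adj b₁ c₁) (e₃ : G.Adj c₁ d₁) (e₄ : G.Adj d₁ u)
    (e₅ : G.Adj u b₂) (e₆ : G.Adj b₂ c₂) (e₇ : G.Adj c₂ d₂) (e₈ : G.Adj d₂ u)
    (e₉ : G.Adj b₁ b₂) :
    G.Adj u c₁ ∨ G.Adj b₁ d₁ ∨ G.Adj u c₂ ∨ G.Adj b₂ d₂ := by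
  by_contra hcon
  push_neg at hcon
  obtain ⟨nuc₁, nb₁d₁, nuc₂, nb₂d₂⟩ := hcon
  simp only [List.pairwise_cons, List.mem_cons, List.not_mem_nil, List.mem_singleton,
    forall_eq_or_imp, forall_eq, List.Pairwise.nil, false_implies, forall_const, and_true,
    ne_eq, or_false, forall_true_left, implies_true] at hdist
  obtain ⟨⟨hub₁, huc₁, hud₁, hub₂, huc₂, hud₂⟩, ⟨hb₁c₁, hb₁d₁, hb₁b₂, hb₁c₂, hb₁d₂⟩,
    ⟨hc₁d₁, hc₁b₂, hc₁c₂, hc₁d₂⟩, ⟨hd₁b₂, hd₁c₂, hd₁d₂⟩, ⟨hb₂c₂, hb₂d₂⟩, hc₂d₂⟩ := hdist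
  -- C1 = {u, b₁, c₁, d₁} and C2 = {u, b₂, c₂, d₂} are induced 4-cycles
  have hC1 : IsC4Set G {u, b₁, c₁, d₁} :=
    dh_c4set G u b₁ c₁ d₁ hub₁ huc₁ hud₁ hb₁c₁ hb₁d₁ hc₁d₁ e₁ e₂ e₃ e₄ nuc₁ nb₁d₁
  have hC2 : IsC4Set G {u, b₂, c₂, d₂} :=
    dh_c4set G u b₂ c₂ d₂ hub₂ huc₂ hud₂ hb₂c₂ hb₂d₂ hc₂d₂ e₅ e₆ e₇ e₈ nuc₂ nb₂d₂
  -- Step 1: b₂ is adjacent to c₁ or d₁ (else house on C1 with apex b₂)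
  have hb₂or : G.Adj b₂ c₁ ∨ G.Adj b₂ d₁ := by
    by_contra h
    push_neg at h
    exact hG.2.1 (dh_house G u b₁ c₁ d₁ b₂ hub₁ huc₁ hud₁ hb₁c₁ hb₁d₁ hc₁d₁
      e₁ e₂ e₃ e₄ nuc₁ nb₁d₁ (Ne.symm hub₂) (Ne.symm hb₁b₂) (Ne.symm hc₁b₂) (Ne.symm hd₁b₂)
      e₅.symm e₉.symm h.1 h.2)
  -- Step 2: in fact b₂ is adjacent to both c₁ and d₁
  have ab₂c₁ : G.Adj b₂ c₁ := by
    by_contra h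
    rcases hb₂or with h' | h'
    · exact h h'
    · -- induced 4-cycle b₁ - b₂ - d₁ - c₁ sharing {b₁, c₁, d₁} with C1
      have hs : IsC4Set G {b₁, b₂, d₁, c₁} :=
        dh_c4set G b₁ b₂ d₁ c₁ hb₁b₂ hb₁d₁ hb₁c₁ (Ne.symm hd₁b₂) (Ne.symm hc₁b₂) (Ne.symm hc₁d₁)
          e₉ h' e₃.symm e₂.symm nb₁d₁ (fun hh => h hh)
      refine dh_two_c4 G hG {b₁, b₂, d₁, c₁} {u, b₁, c₁, d₁} hs hC1 ?_ b₁ c₁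
        (by simp) (by simp) (by simp) (by simp) hb₁c₁
      intro hh
      have : b₂ ∈ ({u, b₁, c₁, d₁} : Set V) := hh ▸ (by simp)
      simp only [Set.mem_insert_iff, Set.mem_singleton_iff] at this
      rcases this with h | h | h | h
      · exact hub₂ h.symm
      · exact hb₁b₂ h.symm
      · exact hc₁b₂ h.symm
      · exact hd₁b₂ h.symm
  have ab₂d₁ : G.Adj b₂ d₁ := by
    by_contra h
    -- induced 4-cycle u - b₂ - c₁ - d₁ sharing {u, c₁, d₁} with C1
    have hs : IsC4Set G {u, b₂, c₁, d₁} :=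
      dh_c4set G u b₂ c₁ d₁ hub₂ huc₁ hud₁ (Ne.symm hc₁b₂) (Ne.symm hd₁b₂) hc₁d₁
        e₅ ab₂c₁ e₃ e₄ nuc₁ h
    refine dh_two_c4 G hG {u, b₂, c₁, d₁} {u, b₁, c₁, d₁} hs hC1 ?_ u c₁
      (by simp) (by simp) (by simp) (by simp) huc₁
    intro hh
    have : b₂ ∈ ({u, b₁, c₁, d₁} : Set V) := hh ▸ (by simp)
    simp only [Set.mem_insert_iff, Set.mem_singleton_iff] at this
    rcases this with h' | h' | h' | h'
    · exact hub₂ h'.symm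
    · exact hb₁b₂ h'.symm
    · exact hc₁b₂ h'.symm
    · exact hd₁b₂ h'.symm
  -- Step 3: symmetrically, b₁ is adjacent to both c₂ and d₂
  have hb₁or : G.Adj b₁ c₂ ∨ G.Adj b₁ d₂ := by
    by_contra h
    push_neg at h
    exact hG.2.1 (dh_house G u b₂ c₂ d₂ b₁ hub₂ huc₂ hud₂ hb₂c₂ hb₂d₂ hc₂d₂
      e₅ e₆ e₇ e₈ nuc₂ nb₂d₂ (Ne.symm hub₁) hb₁b₂ hb₁c₂ hb₁d₂
      e₁.symm e₉ h.1 h.2)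
  have ab₁c₂ : G.Adj b₁ c₂ := by
    by_contra h
    rcases hb₁or with h' | h'
    · exact h h'
    · -- induced 4-cycle b₂ - b₁ - d₂ - c₂ sharing {b₂, c₂, d₂} with C2
      have hs : IsC4Set G {b₂, b₁, d₂, c₂} :=
        dh_c4set G b₂ b₁ d₂ c₂ (Ne.symm hb₁b₂) hb₂d₂ hb₂c₂ hb₁d₂ hb₁c₂ (Ne.symm hc₂d₂)
          e₉.symm h' e₇.symm e₆.symm nb₂d₂ (fun hh => h hh)
      refine dh_two_c4 G hG {b₂, b₁, d₂, c₂} {u, b₂, c₂, d₂} hs hC2 ?_ b₂ c₂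
        (by simp) (by simp) (by simp) (by simp) hb₂c₂
      intro hh
      have : b₁ ∈ ({u, b₂, c₂, d₂} : Set V) := hh ▸ (by simp)
      simp only [Set.mem_insert_iff, Set.mem_singleton_iff] at this
      rcases this with h'' | h'' | h'' | h''
      · exact hub₁ h''.symm
      · exact hb₁b₂ h''
      · exact hb₁c₂ h''
      · exact hb₁d₂ h''
  have ab₁d₂ : G.Adj b₁ d₂ := by
    by_contra h
    -- induced 4-cycle u - b₁ - c₂ - d₂ sharing {u, c₂, d₂} with C2
    have hs : IsC4Set G {u, b₁, c₂, d₂} :=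
      dh_c4set G u b₁ c₂ d₂ hub₁ huc₂ hud₂ hb₁c₂ hb₁d₂ hc₂d₂
        e₁ ab₁c₂ e₇ e₈ nuc₂ h
    refine dh_two_c4 G hG {u, b₁, c₂, d₂} {u, b₂, c₂, d₂} hs hC2 ?_ u c₂
      (by simp) (by simp) (by simp) (by simp) huc₂
    intro hh
    have : b₁ ∈ ({u, b₂, c₂, d₂} : Set V) := hh ▸ (by simp)
    simp only [Set.mem_insert_iff, Set.mem_singleton_iff] at this
    rcases this with h' | h' | h' | h'
    · exact hub₁ h'.symm
    · exact hb₁b₂ h'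
    · exact hb₁c₂ h'
    · exact hb₁d₂ h'
  -- Step 4: c₁ is not adjacent to d₂
  have hnc₁d₂ : ¬ G.Adj c₁ d₂ := by
    intro h
    -- induced 4-cycle u - b₂ - c₁ - d₂ sharing {u, c₁} with C1
    have hs : IsC4Set G {u, b₂, c₁, d₂} :=
      dh_c4set G u b₂ c₁ d₂ hub₂ huc₁ hud₂ (Ne.symm hc₁b₂) hb₂d₂ hc₁d₂
        e₅ ab₂c₁ h e₈ nuc₁ nb₂d₂
    refine dh_two_c4 G hG {u, b₂, c₁, d₂} {u, b₁, c₁, d₁} hs hC1 ?_ u c₁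
      (by simp) (by simp) (by simp) (by simp) huc₁
    intro hh
    have : b₂ ∈ ({u, b₁, c₁, d₁} : Set V) := hh ▸ (by simp)
    simp only [Set.mem_insert_iff, Set.mem_singleton_iff] at this
    rcases this with h' | h' | h' | h'
    · exact hub₂ h'.symm
    · exact hb₁b₂ h'.symm
    · exact hc₁b₂ h'.symm
    · exact hd₁b₂ h'.symm
  -- Step 5: d₁ is not adjacent to d₂
  have hnd₁d₂ : ¬ G.Adj d₁ d₂ := by
    intro h
    -- induced 4-cycle d₂ - b₁ - c₁ - d₁ sharing {b₁, c₁, d₁} with C1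
    have hs : IsC4Set G {d₂, b₁, c₁, d₁} :=
      dh_c4set G d₂ b₁ c₁ d₁ (Ne.symm hb₁d₂) (Ne.symm hc₁d₂) (Ne.symm hd₁d₂) hb₁c₁ hb₁d₁ hc₁d₁
        ab₁d₂.symm e₂ e₃ h (fun hh => hnc₁d₂ hh.symm) nb₁d₁
    refine dh_two_c4 G hG {d₂, b₁, c₁, d₁} {u, b₁, c₁, d₁} hs hC1 ?_ b₁ c₁
      (by simp) (by simp) (by simp) (by simp) hb₁c₁
    intro hh
    have : d₂ ∈ ({u, b₁, c₁, d₁} : Set V) := hh ▸ (by simp)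
    simp only [Set.mem_insert_iff, Set.mem_singleton_iff] at this
    rcases this with h' | h' | h' | h'
    · exact hud₂ h'.symm
    · exact hb₁d₂ h'.symm
    · exact hc₁d₂ h'.symm
    · exact hd₁d₂ h'.symm
  -- Step 6: now C1 with apex d₂ is a house
  exact hG.2.1 (dh_house G u b₁ c₁ d₁ d₂ hub₁ huc₁ hud₁ hb₁c₁ hb₁d₁ hc₁d₁
    e₁ e₂ e₃ e₄ nuc₁ nb₁d₁ (Ne.symm hud₂) (Ne.symm hb₁d₂) (Ne.symm hc₁d₂) (Ne.symm hd₁d₂)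
    e₈ ab₁d₂.symm (fun hh => hnc₁d₂ hh.symm) (fun hh => hnd₁d₂ hh.symm))
end

section
/- Let G be an almost-chordal graph, let C = {v_1, v_2, v_3, v_4} be the vertex set of an induced 4-cycle in G with edges v_1v_2, v_2v_3, v_3v_4, v_4v_1, and let G' = G/v_1v_2 be the graph obtained by contracting the edge v_1v_2, with v_{12} the vertex of G' resulting from the contraction. Then every induced 4-cycle of G' that contains v_{12} is not new; that is, for every induced 4-cycle C' of G' containing v_{12}, the two neighbors of v_{12} on C' are both adjacent to v_1 in G or both adjacent to v_2 in G. -/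
open SimpleGraph

variable {V : Type*}

/-! If the two cycle-neighbours `a`, `c` of the merged vertex of an induced 4-cycle `w a b c` of
`G/uv` are not both adjacent to `u` nor both to `v`, say `a ~ u` and `c ~ v`, then `u a b c v`
is an induced 5-cycle of `G`, i.e. a hole. -/

section
variable {G : SimpleGraph V}

theorem IsInducedCycle.adj_add_one {n : ℕ} {f : ZMod n → V} (hf : IsInducedCycle G f)
    (i : ZMod n) : G.Adj (f i) (f (i + 1)) :=
  (hf.2 _ _).2 (.inl rfl)

theorem IsInducedCycle.not_adj_add_two {f : ZMod 4 → V} (hf : IsInducedCycle G f)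
    (i : ZMod 4) : ¬ G.Adj (f i) (f (i + 2)) := by
  rw [hf.2]
  revert i
  decide

theorem hasHole_of_pentagon {p q r s t : V}
    (hpq : G.Adj p q) (hqr : G.Adj q r) (hrs : G.Adj r s) (hst : G.Adj s t) (htp : G.Adj t p)
    (hpr : ¬ G.Adj p r) (hps : ¬ G.Adj p s) (hqs : ¬ G.Adj q s) (hqt : ¬ G.Adj q t)
    (hrt : ¬ G.Adj r t) : HasHole G := by
  let f : ZMod 5 → V := ![p, q, r, s, t]
  have hadj : ∀ x y : ZMod 5, G.Adj (f x) (f y) ↔ (y = x + 1 ∨ x = y + 1) := by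
    have cases : ∀ x : ZMod 5, x = 0 ∨ x = 1 ∨ x = 2 ∨ x = 3 ∨ x = 4 := by decide
    intro x y
    rcases cases x with rfl | rfl | rfl | rfl | rfl <;>
      rcases cases y with rfl | rfl | rfl | rfl | rfl <;>
      simp [f, hpq, hqr, hrs, hst, htp, hpq.symm, hqr.symm, hrs.symm, hst.symm, htp.symm,
        hpr, hps, hqs, hqt, hrt, mt G.adj_symm hpr, mt G.adj_symm hps,
        mt G.adj_symm hqs, mt G.adj_symm hqt, mt G.adj_symm hrt] <;> decide
  refine ⟨5, f, le_rfl, fun x y hxy => ?_, hadj⟩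
  -- on a 5-cycle a vertex is determined by its two neighbours
  have hnbrs : ∀ k, (k = x + 1 ∨ x = k + 1) ↔ (k = y + 1 ∨ y = k + 1) := fun k => by
    rw [← hadj, ← hadj, hxy]
  clear hxy
  revert x y
  decide

theorem adj_and_adj_or_adj_and_adj_of_not_hasHole (hG : ¬ HasHole G) {u v a b c : V}
    (huv : G.Adj u v) (hab : G.Adj a b) (hbc : G.Adj b c) (hac : ¬ G.Adj a c)
    (hub : ¬ G.Adj u b) (hvb : ¬ G.Adj v b) (ha : G.Adj u a ∨ G.Adj v a)
    (hc : G.Adj u c ∨ G.Adj v c) :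
    (G.Adj u a ∧ G.Adj u c) ∨ (G.Adj v a ∧ G.Adj v c) := by
  have crossed : ∀ {x y : V}, G.Adj x y → ¬ G.Adj x b → ¬ G.Adj y b → G.Adj x a → G.Adj y c →
      G.Adj x c ∨ G.Adj y a := by
    intro x y hxy hxb hyb hxa hyc
    by_contra! h
    exact hG (hasHole_of_pentagon hxa hab hbc hyc.symm hxy.symm hxb h.1 hac (mt G.adj_symm h.2)
      (mt G.adj_symm hyb))
  rcases ha with hua | hva <;> rcases hc with huc | hvc
  · exact .inl ⟨hua, huc⟩
  · exact (crossed huv hub hvb hua hvc).imp (⟨hua, ·⟩) (⟨·, hvc⟩)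
  · exact (crossed huv.symm hvb hub hva huc).symm.imp (⟨·, huc⟩) (⟨hva, ·⟩)
  · exact .inr ⟨hva, hvc⟩

theorem contractEdge_adj_of_ne {u v : V} {x y : {z : V // z ≠ v}} (hx : x.1 ≠ u)
    (hy : y.1 ≠ u) : (contractEdge G u v).Adj x y ↔ G.Adj x y := by
  rw [contractEdge, fromRel_adj]
  constructor
  · rintro ⟨-, h | h⟩ <;> simp_all [G.adj_comm]
  · exact fun h => ⟨fun hxy => h.ne (congrArg _ hxy), .inl (.inl h)⟩

theorem contractEdge_adj_of_eq {u v : V} {x y : {z : V // z ≠ v}} (hx : x.1 = u)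
    (hy : y.1 ≠ u) : (contractEdge G u v).Adj x y ↔ G.Adj u y ∨ G.Adj v y := by
  rw [contractEdge, fromRel_adj]
  constructor
  · rintro ⟨-, h | h⟩ <;> simp_all [G.adj_comm]
  · exact fun h => ⟨fun hxy => hy (hxy ▸ hx), .inl (by aesop)⟩

theorem adj_and_adj_or_adj_and_adj_of_contractEdge (hG : ¬ HasHole G) {u v : V}
    (huv : G.Adj u v) {w a b c : {z : V // z ≠ v}} (hw : w.1 = u) (hbw : b ≠ w)
    (hwa : (contractEdge G u v).Adj w a) (hab : (contractEdge G u v).Adj a b)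
    (hbc : (contractEdge G u v).Adj b c) (hcw : (contractEdge G u v).Adj c w)
    (hwb : ¬ (contractEdge G u v).Adj w b) (hac : ¬ (contractEdge G u v).Adj a c) :
    (G.Adj u a ∧ G.Adj u c) ∨ (G.Adj v a ∧ G.Adj v c) := by
  have ne_merged : ∀ {x : {z : V // z ≠ v}}, x ≠ w → x.1 ≠ u :=
    fun hxw hx => hxw (Subtype.ext (hx.trans hw.symm))
  have ha := ne_merged hwa.ne'
  have hb := ne_merged hbw
  have hc := ne_merged hcw.ne
  rw [contractEdge_adj_of_ne ha hb] at hab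
  rw [contractEdge_adj_of_ne hb hc] at hbc
  rw [contractEdge_adj_of_ne ha hc] at hac
  rw [contractEdge_adj_of_eq hw hb, not_or] at hwb
  rw [contractEdge_adj_of_eq hw ha] at hwa
  rw [(contractEdge G u v).adj_comm, contractEdge_adj_of_eq hw hc] at hcw
  exact adj_and_adj_or_adj_and_adj_of_not_hasHole hG huv hab hbc hac hwb.1 hwb.2 hwa hcw

end

/-- Contracting an edge of an induced 4-cycle of an almost-chordal graph creates no new
induced 4-cycle: for any induced 4-cycle of the contracted graph through the merged vertex,
its two neighbours on that cycle are both adjacent to `v₁` in `G` or both adjacent to `v₂`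
in `G` (STATEMENT 8). -/
theorem almost_chordal_contract_no_new_C4
    (G : SimpleGraph V) (hG : AlmostChordal G)
    (f : ZMod 4 → V) (hf : IsInducedCycle G f)
    (g : ZMod 4 → {x : V // x ≠ f 1})
    (hg : IsInducedCycle (contractEdge G (f 0) (f 1)) g)
    (i : ZMod 4) (hi : (g i).1 = f 0) :
    (G.Adj (f 0) (g (i + 1)).1 ∧ G.Adj (f 0) (g (i - 1)).1) ∨
    (G.Adj (f 1) (g (i + 1)).1 ∧ G.Adj (f 1) (g (i - 1)).1) := by
  have index : ∀ j : ZMod 4, j + 1 + 1 = j + 2 ∧ j + 2 + 1 = j - 1 ∧ j - 1 + 1 = j ∧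
      j - 1 + 2 = j + 1 ∧ j + 2 ≠ j := by decide
  obtain ⟨hab_idx, hbc_idx, hcw_idx, hca_idx, hbw_idx⟩ := index i
  have hab := hg.adj_add_one (i + 1)
  have hbc := hg.adj_add_one (i + 2)
  have hcw := hg.adj_add_one (i - 1)
  have hca := hg.not_adj_add_two (i - 1)
  rw [hab_idx] at hab
  rw [hbc_idx] at hbc
  rw [hcw_idx] at hcw
  rw [hca_idx] at hca
  exact adj_and_adj_or_adj_and_adj_of_contractEdge hG.1 (hf.adj_add_one 0) hi (hg.1.ne hbw_idx)
    (hg.adj_add_one i) hab hbc hcw (hg.not_adj_add_two i) (mt (·.symm) hca)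
end

section
/- Let G be an almost-chordal graph, let C = {v_1, v_2, v_3, v_4} be the vertex set of an induced 4-cycle in G with v_1v_2 an edge of this cycle. Then the graph G/v_1v_2 obtained from G by contracting the edge v_1v_2 is almost-chordal. -/
open SimpleGraph

variable {V : Type*}

structure IC4 (G : SimpleGraph V) (a b c d : V) : Prop where
  ab : G.Adj a b
  bc : G.Adj b c
  cd : G.Adj c d
  da : G.Adj d a
  ac : ¬ G.Adj a c
  bd : ¬ G.Adj b d
  nac : a ≠ c
  nbd : b ≠ d

namespace IC4
variable {G : SimpleGraph V} {a b c d : V}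

lemma symm (h : IC4 G a b c d) : IC4 G b a d c :=
  ⟨h.ab.symm, h.da.symm, h.cd.symm, h.bc.symm, h.bd, h.ac, h.nbd, h.nac⟩

lemma rev (h : IC4 G a b c d) : IC4 G a d c b :=
  ⟨h.da.symm, h.cd.symm, h.bc.symm, h.ab.symm, h.ac, fun x => h.bd x.symm, h.nac, h.nbd.symm⟩

lemma cycle (h : IC4 G a b c d) : IsInducedCycle G (n := 4) ![a,b,c,d] := by
  have hall : ∀ i : ZMod 4, i = 0 ∨ i = 1 ∨ i = 2 ∨ i = 3 := by decide
  constructor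
  · intro i j hij
    rcases hall i with rfl|rfl|rfl|rfl <;> rcases hall j with rfl|rfl|rfl|rfl <;>
      first
        | rfl
        | exact absurd hij (by first
            | exact h.ab.ne
            | exact h.ab.ne'
            | exact h.bc.ne
            | exact h.bc.ne'
            | exact h.cd.ne
            | exact h.cd.ne'
            | exact h.da.ne
            | exact h.da.ne'
            | exact h.nac
            | exact h.nac.symm
            | exact h.nbd
            | exact h.nbd.symm)
  · intro i j
    rcases hall i with rfl|rfl|rfl|rfl <;> rcases hall j with rfl|rfl|rfl|rfl <;>
      first
        | exact iff_of_true (by first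
            | exact h.ab
            | exact h.ab.symm
            | exact h.bc
            | exact h.bc.symm
            | exact h.cd
            | exact h.cd.symm
            | exact h.da
            | exact h.da.symm) (by decide)
        | exact iff_of_false (by first
            | exact G.irrefl
            | exact h.ac
            | exact fun x => h.ac x.symm
            | exact h.bd
            | exact fun x => h.bd x.symm) (by decide)

lemma c4set (h : IC4 G a b c d) : IsC4Set G {a, b, c, d} := by
  refine ⟨![a,b,c,d], h.cycle, ?_⟩
  have hall : ∀ i : ZMod 4, i = 0 ∨ i = 1 ∨ i = 2 ∨ i = 3 := by decide
  ext x
  simp only [Set.mem_insert_iff, Set.mem_singleton_iff, Set.mem_range]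
  constructor
  · rintro (rfl|rfl|rfl|rfl)
    exacts [⟨0, rfl⟩, ⟨1, rfl⟩, ⟨2, rfl⟩, ⟨3, rfl⟩]
  · rintro ⟨i, rfl⟩
    rcases hall i with rfl|rfl|rfl|rfl
    exacts [Or.inl rfl, Or.inr (Or.inl rfl), Or.inr (Or.inr (Or.inl rfl)),
      Or.inr (Or.inr (Or.inr rfl))]

end IC4

section prim
variable {G : SimpleGraph V}

lemma hole5 (hH : ¬ HasHole G) (a b c d e : V)
    (hab : G.Adj a b) (hbc : G.Adj b c) (hcd : G.Adj c d) (hde : G.Adj d e)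
    (hea : G.Adj e a)
    (hac : ¬ G.Adj a c) (had : ¬ G.Adj a d) (hbd : ¬ G.Adj b d)
    (hbe : ¬ G.Adj b e) (hce : ¬ G.Adj c e)
    (nac : a ≠ c) (nad : a ≠ d) (nbd : b ≠ d) (nbe : b ≠ e) (nce : c ≠ e) : False := by
  refine hH ⟨5, ![a,b,c,d,e], by norm_num, ?_, ?_⟩
  · have hall : ∀ i : ZMod 5, i = 0 ∨ i = 1 ∨ i = 2 ∨ i = 3 ∨ i = 4 := by decide
    intro i j hij
    rcases hall i with rfl|rfl|rfl|rfl|rfl <;> rcases hall j with rfl|rfl|rfl|rfl|rfl <;>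
      first
        | rfl
        | exact absurd hij (by first
            | exact hab.ne | exact hab.ne' | exact hbc.ne | exact hbc.ne'
            | exact hcd.ne | exact hcd.ne' | exact hde.ne | exact hde.ne'
            | exact hea.ne | exact hea.ne'
            | exact nac | exact nac.symm | exact nad | exact nad.symm
            | exact nbd | exact nbd.symm | exact nbe | exact nbe.symm
            | exact nce | exact nce.symm)
  · have hall : ∀ i : ZMod 5, i = 0 ∨ i = 1 ∨ i = 2 ∨ i = 3 ∨ i = 4 := by decide
    intro i j
    rcases hall i with rfl|rfl|rfl|rfl|rfl <;> rcases hall j with rfl|rfl|rfl|rfl|rfl <;>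
      first
        | exact iff_of_true (by first
            | exact hab | exact hab.symm | exact hbc | exact hbc.symm
            | exact hcd | exact hcd.symm | exact hde | exact hde.symm
            | exact hea | exact hea.symm) (by decide)
        | exact iff_of_false (by first
            | exact G.irrefl
            | exact hac | exact fun x => hac x.symm
            | exact had | exact fun x => had x.symm
            | exact hbd | exact fun x => hbd x.symm
            | exact hbe | exact fun x => hbe x.symm
            | exact hce | exact fun x => hce x.symm) (by decide)

lemma houseG (hH : ¬ HasHouse G) {a b c d : V} (h : IC4 G a b c d) (e : V)
    (nea : e ≠ a) (neb : e ≠ b) (nec : e ≠ c) (ned : e ≠ d)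
    (hea : G.Adj e a) (heb : G.Adj e b) (hec : ¬ G.Adj e c) (hed : ¬ G.Adj e d) :
    False := by
  refine hH ⟨![a,b,c,d], e, h.cycle, ?_, hea, heb, hec, hed⟩
  have hall : ∀ i : ZMod 4, i = 0 ∨ i = 1 ∨ i = 2 ∨ i = 3 := by decide
  intro i
  rcases hall i with rfl|rfl|rfl|rfl
  exacts [nea, neb, nec, ned]

lemma pair4 (hP : ∀ s t : Set V, IsC4Set G s → IsC4Set G t → s ≠ t → (s ∩ t).Subsingleton)
    {a b c d a' b' c' d' : V} (h1 : IC4 G a b c d) (h2 : IC4 G a' b' c' d')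
    (x y : V)
    (hx1 : x ∈ ({a,b,c,d} : Set V)) (hx2 : x ∈ ({a',b',c',d'} : Set V))
    (hy1 : y ∈ ({a,b,c,d} : Set V)) (hy2 : y ∈ ({a',b',c',d'} : Set V))
    (hxy : x ≠ y) (hne : ({a,b,c,d} : Set V) ≠ ({a',b',c',d'} : Set V)) : False :=
  hxy (hP _ _ h1.c4set h2.c4set hne ⟨hx1, hx2⟩ ⟨hy1, hy2⟩)

end prim

lemma natCast_zmod_eq_iff {n : ℕ} [NeZero n] (a b : ℕ) (ha : a < n) (hb : b < n) :
    ((a : ZMod n) = (b : ZMod n)) ↔ a = b := by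
  rw [ZMod.natCast_eq_natCast_iff, Nat.ModEq, Nat.mod_eq_of_lt ha, Nat.mod_eq_of_lt hb]

lemma neg_one_eq_cast {n : ℕ} (hn : 1 ≤ n) : (((n - 1 : ℕ) : ZMod n)) = -1 := by
  rw [Nat.cast_sub hn, ZMod.natCast_self, Nat.cast_one, zero_sub]

/-- substitute a new vertex for position `0` of a cycle-like structure. -/
lemma hole_subst {n : ℕ} (hn : 5 ≤ n) (y : ZMod n → V) (r : V)
    (hinj : ∀ i j, i ≠ 0 → j ≠ 0 → y i = y j → i = j)
    (hadj : ∀ i j : ZMod n, i ≠ 0 → j ≠ 0 → (G.Adj (y i) (y j) ↔ (j = i + 1 ∨ i = j + 1)))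
    (h1 : G.Adj r (y 1)) (hm : G.Adj r (y (-1)))
    (hnon : ∀ j, j ≠ 0 → j ≠ 1 → j ≠ (-1 : ZMod n) → ¬ G.Adj r (y j))
    (hner : ∀ i, i ≠ 0 → r ≠ y i) : HasHole G := by
  classical
  haveI : NeZero n := ⟨by omega⟩
  have h10 : (1 : ZMod n) ≠ 0 := by
    have := (natCast_zmod_eq_iff (n := n) 1 0 (by omega) (by omega))
    simpa using this.not.mpr (by omega)
  have hm0 : (-1 : ZMod n) ≠ 0 := by
    rw [← neg_one_eq_cast (by omega : 1 ≤ n)]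
    have := (natCast_zmod_eq_iff (n := n) (n-1) 0 (by omega) (by omega))
    simpa using this.not.mpr (by omega)
  refine ⟨n, fun i => if i = 0 then r else y i, hn, ?_, ?_⟩
  · intro i j h
    dsimp only at h
    by_cases hi : i = 0 <;> by_cases hj : j = 0
    · rw [hi, hj]
    · rw [if_pos hi, if_neg hj] at h
      exact absurd h (hner j hj)
    · rw [if_neg hi, if_pos hj] at h
      exact absurd h.symm (hner i hi)
    · rw [if_neg hi, if_neg hj] at h
      exact hinj i j hi hj h
  · have key : ∀ j : ZMod n, j ≠ 0 → (G.Adj r (y j) ↔ (j = 0 + 1 ∨ 0 = j + 1)) := by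
      intro j hj
      by_cases hj1 : j = 1
      · subst hj1
        exact iff_of_true h1 (Or.inl (zero_add 1).symm)
      · by_cases hjm : j = -1
        · subst hjm
          exact iff_of_true hm (Or.inr (neg_add_cancel 1).symm)
        · refine iff_of_false (hnon j hj hj1 hjm) ?_
          rintro (h | h)
          · rw [zero_add] at h; exact hj1 h
          · exact hjm (eq_neg_of_add_eq_zero_left h.symm)
    intro i j
    dsimp only
    by_cases hi : i = 0 <;> by_cases hj : j = 0
    · subst hi; subst hj
      rw [if_pos rfl]
      refine iff_of_false G.irrefl ?_
      rintro (h | h) <;> · rw [zero_add] at h; exact h10 h.symm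
    · subst hi
      rw [if_pos rfl, if_neg hj]
      exact key j hj
    · subst hj
      rw [if_pos rfl, if_neg hi]
      rw [G.adj_comm, or_comm]
      exact key i hi
    · rw [if_neg hi, if_neg hj]
      exact hadj i j hi hj

/-- split the contracted vertex into the edge `r0r1`, getting a hole of length `n+1`. -/
lemma hole_split {n : ℕ} (hn : 5 ≤ n) (y : ZMod n → V) (r0 r1 : V)
    (hinj : ∀ i j, i ≠ 0 → j ≠ 0 → y i = y j → i = j)
    (hadj : ∀ i j : ZMod n, i ≠ 0 → j ≠ 0 → (G.Adj (y i) (y j) ↔ (j = i + 1 ∨ i = j + 1)))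
    (h01 : G.Adj r0 r1)
    (ha : G.Adj r0 (y 1)) (hb : G.Adj r1 (y (-1)))
    (hnon0 : ∀ j, j ≠ 0 → j ≠ 1 → ¬ G.Adj r0 (y j))
    (hnon1 : ∀ j, j ≠ 0 → j ≠ (-1 : ZMod n) → ¬ G.Adj r1 (y j))
    (hner0 : ∀ i, i ≠ 0 → r0 ≠ y i) (hner1 : ∀ i, i ≠ 0 → r1 ≠ y i) : HasHole G := by
  classical
  haveI : NeZero n := ⟨by omega⟩
  haveI : NeZero (n+1) := ⟨by omega⟩
  haveI : Fact (1 < n + 1) := ⟨by omega⟩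
  have hvlt : ∀ k : ZMod (n+1), k.val < n + 1 := fun k => ZMod.val_lt k
  have hvinj : ∀ k l : ZMod (n+1), k.val = l.val → k = l := by
    intro k l h
    have := ZMod.val_injective (n+1) (by exact h)
    exact this
  have hsucc : ∀ k : ZMod (n+1), (k + 1).val = (k.val + 1) % (n+1) := by
    intro k
    rw [ZMod.val_add, ZMod.val_one]
  have hsucc2 : ∀ k l : ZMod (n+1),
      l = k + 1 ↔ (l.val = k.val + 1 ∨ (k.val = n ∧ l.val = 0)) := by
    intro k l
    constructor
    · intro h
      have h' : l.val = (k.val + 1) % (n+1) := by rw [h, hsucc]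
      by_cases hk : k.val = n
      · right
        refine ⟨hk, ?_⟩
        rw [h', hk, Nat.mod_self]
      · left
        rw [Nat.mod_eq_of_lt (by have := hvlt k; omega)] at h'
        exact h'
    · rintro (h | ⟨h1, h2⟩)
      · apply hvinj
        rw [hsucc, Nat.mod_eq_of_lt (by have := hvlt l; omega)]
        exact h
      · apply hvinj
        rw [hsucc, h1, h2, Nat.mod_self]
  -- facts about casts into ZMod n
  have hc_inj : ∀ a b : ℕ, a < n → b < n → (((a : ZMod n)) = (b : ZMod n) ↔ a = b) :=
    fun a b ha hb => natCast_zmod_eq_iff a b ha hb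
  have hc0 : ∀ t : ℕ, 1 ≤ t → t < n → ((t : ZMod n)) ≠ 0 := by
    intro t h1t htn h
    have : t = 0 := by
      have := (hc_inj t 0 htn (by omega)).mp (by simpa using h)
      omega
    omega
  have hc1 : ∀ t : ℕ, t < n → t ≠ 1 → ((t : ZMod n)) ≠ 1 := by
    intro t htn ht1 h
    exact ht1 ((hc_inj t 1 htn (by omega)).mp (by simpa using h))
  have hcm : ∀ t : ℕ, t < n → t ≠ n - 1 → ((t : ZMod n)) ≠ -1 := by
    intro t htn htm h
    rw [← neg_one_eq_cast (by omega : 1 ≤ n)] at h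
    exact htm ((hc_inj t (n-1) htn (by omega)).mp h)
  set g : ZMod (n+1) → V := fun k =>
    if k.val = 0 then r1 else if k.val = 1 then r0 else y ((k.val - 1 : ℕ) : ZMod n)
    with hg
  have hg0 : ∀ k : ZMod (n+1), k.val = 0 → g k = r1 := by
    intro k hk; rw [hg]; simp only; rw [if_pos hk]
  have hg1 : ∀ k : ZMod (n+1), k.val = 1 → g k = r0 := by
    intro k hk; rw [hg]; simp only; rw [if_neg (by omega), if_pos hk]
  have hgm : ∀ k : ZMod (n+1), 2 ≤ k.val → g k = y ((k.val - 1 : ℕ) : ZMod n) := by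
    intro k hk; rw [hg]; simp only; rw [if_neg (by omega), if_neg (by omega)]
  -- the mid-mid index comparison
  have key : ∀ k l : ZMod (n+1), 2 ≤ k.val → 2 ≤ l.val →
      ((((l.val - 1 : ℕ) : ZMod n)) = ((k.val - 1 : ℕ) : ZMod n) + 1 ↔
        l.val = k.val + 1) := by
    intro k l hk hl
    have hkv := hvlt k; have hlv := hvlt l
    rw [show (((k.val - 1 : ℕ) : ZMod n)) + 1 = (((k.val - 1 + 1 : ℕ)) : ZMod n) by
      push_cast; ring]
    rw [show k.val - 1 + 1 = k.val from by omega]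
    rw [ZMod.natCast_eq_natCast_iff, Nat.ModEq]
    rw [Nat.mod_eq_of_lt (show l.val - 1 < n by omega)]
    constructor
    · intro h
      by_cases hkn : k.val = n
      · rw [hkn, Nat.mod_self] at h; omega
      · rw [Nat.mod_eq_of_lt (by omega)] at h; omega
    · intro h
      rw [Nat.mod_eq_of_lt (by omega)]; omega
  refine ⟨n + 1, g, by omega, ?_, ?_⟩
  · -- injectivity
    intro k l h
    have hkv := hvlt k; have hlv := hvlt l
    apply hvinj
    rcases Nat.lt_or_ge k.val 2 with hk2 | hk2 <;> rcases Nat.lt_or_ge l.val 2 with hl2 | hl2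
    · -- both small
      rcases Nat.lt_or_ge k.val 1 with hk1 | hk1 <;>
        rcases Nat.lt_or_ge l.val 1 with hl1 | hl1
      · omega
      · rw [hg0 k (by omega), hg1 l (by omega)] at h
        exact absurd h h01.ne'
      · rw [hg1 k (by omega), hg0 l (by omega)] at h
        exact absurd h h01.ne
      · omega
    · exfalso
      rcases Nat.lt_or_ge k.val 1 with hk1 | hk1
      · rw [hg0 k (by omega), hgm l hl2] at h
        exact hner1 _ (hc0 (l.val - 1) (by omega) (by omega)) h
      · rw [hg1 k (by omega), hgm l hl2] at h
        exact hner0 _ (hc0 (l.val - 1) (by omega) (by omega)) h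
    · exfalso
      rcases Nat.lt_or_ge l.val 1 with hl1 | hl1
      · rw [hg0 l (by omega), hgm k hk2] at h
        exact hner1 _ (hc0 (k.val - 1) (by omega) (by omega)) h.symm
      · rw [hg1 l (by omega), hgm k hk2] at h
        exact hner0 _ (hc0 (k.val - 1) (by omega) (by omega)) h.symm
    · rw [hgm k hk2, hgm l hl2] at h
      have := hinj _ _ (hc0 (k.val - 1) (by omega) (by omega))
        (hc0 (l.val - 1) (by omega) (by omega)) h
      have := (hc_inj (k.val - 1) (l.val - 1) (by omega) (by omega)).mp this
      omega
  · -- adjacency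
    intro k l
    have hkv := hvlt k; have hlv := hvlt l
    rw [hsucc2 k l, hsucc2 l k]
    rcases Nat.lt_or_ge k.val 2 with hk2 | hk2 <;> rcases Nat.lt_or_ge l.val 2 with hl2 | hl2
    · -- both ends
      rcases Nat.lt_or_ge k.val 1 with hk1 | hk1 <;> rcases Nat.lt_or_ge l.val 1 with hl1 | hl1
      · rw [hg0 k (by omega), hg0 l (by omega)]
        exact iff_of_false G.irrefl (by omega)
      · rw [hg0 k (by omega), hg1 l (by omega)]
        exact iff_of_true h01.symm (by omega)
      · rw [hg1 k (by omega), hg0 l (by omega)]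
        exact iff_of_true h01 (by omega)
      · rw [hg1 k (by omega), hg1 l (by omega)]
        exact iff_of_false G.irrefl (by omega)
    · -- k end, l mid
      rcases Nat.lt_or_ge k.val 1 with hk1 | hk1
      · -- g k = r1
        rw [hg0 k (by omega), hgm l hl2]
        by_cases hln : l.val = n
        · rw [show (((l.val - 1 : ℕ)) : ZMod n) = -1 by
            rw [hln]; exact neg_one_eq_cast (by omega)]
          exact iff_of_true hb (by omega)
        · exact iff_of_false
            (hnon1 _ (hc0 (l.val - 1) (by omega) (by omega))
              (hcm (l.val - 1) (by omega) (by omega))) (by omega)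
      · -- g k = r0
        rw [hg1 k (by omega), hgm l hl2]
        by_cases hl2' : l.val = 2
        · rw [show (((l.val - 1 : ℕ)) : ZMod n) = 1 by rw [hl2']; exact Nat.cast_one]
          exact iff_of_true ha (by omega)
        · exact iff_of_false
            (hnon0 _ (hc0 (l.val - 1) (by omega) (by omega))
              (hc1 (l.val - 1) (by omega) (by omega))) (by omega)
    · -- k mid, l end
      rcases Nat.lt_or_ge l.val 1 with hl1 | hl1
      · rw [hg0 l (by omega), hgm k hk2]
        by_cases hkn : k.val = n
        · rw [show (((k.val - 1 : ℕ)) : ZMod n) = -1 by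
            rw [hkn]; exact neg_one_eq_cast (by omega)]
          exact iff_of_true hb.symm (by omega)
        · refine iff_of_false (fun hadj' => ?_) (by omega)
          exact (hnon1 _ (hc0 (k.val - 1) (by omega) (by omega))
            (hcm (k.val - 1) (by omega) (by omega))) hadj'.symm
      · rw [hg1 l (by omega), hgm k hk2]
        by_cases hk2' : k.val = 2
        · rw [show (((k.val - 1 : ℕ)) : ZMod n) = 1 by rw [hk2']; exact Nat.cast_one]
          exact iff_of_true ha.symm (by omega)
        · refine iff_of_false (fun hadj' => ?_) (by omega)
          exact (hnon0 _ (hc0 (k.val - 1) (by omega) (by omega))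
            (hc1 (k.val - 1) (by omega) (by omega))) hadj'.symm
    · -- both mid
      rw [hgm k hk2, hgm l hl2]
      rw [hadj _ _ (hc0 (k.val - 1) (by omega) (by omega))
        (hc0 (l.val - 1) (by omega) (by omega))]
      rw [key k l hk2 hl2, key l k hl2 hk2]
      omega

lemma mem4l {a b c d : V} : a ∈ ({a,b,c,d} : Set V) := Or.inl rfl
lemma mem4b {a b c d : V} : b ∈ ({a,b,c,d} : Set V) := Or.inr (Or.inl rfl)
lemma mem4c {a b c d : V} : c ∈ ({a,b,c,d} : Set V) := Or.inr (Or.inr (Or.inl rfl))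
lemma mem4d {a b c d : V} : d ∈ ({a,b,c,d} : Set V) := Or.inr (Or.inr (Or.inr rfl))

lemma mem4_cases {x a b c d : V} (h : x ∈ ({a,b,c,d} : Set V)) :
    x = a ∨ x = b ∨ x = c ∨ x = d := by
  simpa only [Set.mem_insert_iff, Set.mem_singleton_iff] using h

lemma mem4_of {x a b c d : V} (h : x = a ∨ x = b ∨ x = c ∨ x = d) :
    x ∈ ({a,b,c,d} : Set V) := by
  simpa only [Set.mem_insert_iff, Set.mem_singleton_iff] using h

lemma set4_ne {a b c d a' b' c' d' x : V}
    (hx : x ∈ ({a,b,c,d} : Set V))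
    (h1 : x ≠ a') (h2 : x ≠ b') (h3 : x ≠ c') (h4 : x ≠ d') :
    ({a,b,c,d} : Set V) ≠ ({a',b',c',d'} : Set V) := by
  intro h
  rcases mem4_cases (h ▸ hx) with h'|h'|h'|h'
  exacts [h1 h', h2 h', h3 h', h4 h']

lemma set4_ne' {a b c d a' b' c' d' x : V}
    (hx : x ∈ ({a',b',c',d'} : Set V))
    (h1 : x ≠ a) (h2 : x ≠ b) (h3 : x ≠ c) (h4 : x ≠ d) :
    ({a,b,c,d} : Set V) ≠ ({a',b',c',d'} : Set V) := by
  intro h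
  rcases mem4_cases (h.symm ▸ hx) with h'|h'|h'|h'
  exacts [h1 h', h2 h', h3 h', h4 h']

section main
variable {w0 w1 w2 w3 : V}

/-- points of a "side" induced square through `w0` avoid `w2, w3`. -/
lemma notC (hPair : ∀ s t : Set V, IsC4Set G s → IsC4Set G t → s ≠ t → (s ∩ t).Subsingleton) (hC : IC4 G w0 w1 w2 w3) {m1 m2 m3 : V}
    (hS : IC4 G w0 m1 m2 m3)
    (h1 : m1 ≠ w1) (h2 : m2 ≠ w1) (h3 : m3 ≠ w1)
    (h1' : m1 ≠ w0) (h2' : m2 ≠ w0) (h3' : m3 ≠ w0)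
    (x : V) (hx : x = m1 ∨ x = m2 ∨ x = m3) (hxw : x = w2 ∨ x = w3) : False := by
  have hxne : w0 ≠ x := by
    rcases hxw with rfl|rfl
    · exact hC.nac
    · exact hC.da.ne'
  refine pair4 hPair hS hC w0 x mem4l mem4l (mem4_of (Or.inr hx)) ?_ hxne ?_
  · exact mem4_of (Or.inr (Or.inr hxw))
  · exact set4_ne' (x := w1) mem4b hC.ab.ne' h1.symm h2.symm h3.symm

/-- mixed case for a contracted house apex. -/
lemma LA' (hPair : ∀ s t : Set V, IsC4Set G s → IsC4Set G t → s ≠ t → (s ∩ t).Subsingleton) (hC : IC4 G w0 w1 w2 w3) {p0 p1 p2 p3 : V}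
    (hP : IC4 G p0 p1 p2 p3)
    (np0 : p0 ≠ w0) (np0' : p0 ≠ w1) (np1 : p1 ≠ w0) (np1' : p1 ≠ w1)
    (np2 : p2 ≠ w0) (np2' : p2 ≠ w1) (np3 : p3 ≠ w0) (np3' : p3 ≠ w1)
    (A0 : G.Adj w0 p0) (B1 : G.Adj w1 p1)
    (nA1 : ¬ G.Adj w0 p1) (nB0 : ¬ G.Adj w1 p0) : False := by
  have Q : IC4 G w0 p0 p1 w1 :=
    ⟨A0, hP.ab, B1.symm, hC.ab.symm, nA1, fun h => nB0 h.symm, np1.symm, np0'⟩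
  by_cases heq : ({w0,p0,p1,w1} : Set V) = ({w0,w1,w2,w3} : Set V)
  · have hp0 : p0 = w3 := by
      rcases mem4_cases (heq ▸ (mem4b : p0 ∈ ({w0,p0,p1,w1} : Set V))) with h|h|h|h
      · exact absurd h np0
      · exact absurd h np0'
      · exact absurd (h ▸ A0) hC.ac
      · exact h
    have hp1 : p1 = w2 := by
      rcases mem4_cases (heq ▸ (mem4c : p1 ∈ ({w0,p0,p1,w1} : Set V))) with h|h|h|h
      · exact absurd h np1
      · exact absurd h np1'
      · exact h
      · exact absurd (h ▸ B1) hC.bd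
    refine pair4 hPair hP hC p0 p1 mem4l ?_ mem4b ?_ hP.ab.ne ?_
    · exact mem4_of (Or.inr (Or.inr (Or.inr hp0)))
    · exact mem4_of (Or.inr (Or.inr (Or.inl hp1)))
    · refine set4_ne (x := p2) mem4c np2 np2' ?_ ?_
      · rw [← hp1]; exact hP.bc.ne'
      · rw [← hp0]; exact hP.nac.symm
  · exact pair4 hPair Q hC w0 w1 mem4l mem4l mem4d mem4b hC.ab.ne heq

/-- case: contracted vertex is the house apex `e`. -/
lemma LA (hHouse : ¬ HasHouse G) (hPair : ∀ s t : Set V, IsC4Set G s → IsC4Set G t → s ≠ t → (s ∩ t).Subsingleton) (hC : IC4 G w0 w1 w2 w3) {p0 p1 p2 p3 : V}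
    (hP : IC4 G p0 p1 p2 p3)
    (np0 : p0 ≠ w0) (np0' : p0 ≠ w1) (np1 : p1 ≠ w0) (np1' : p1 ≠ w1)
    (np2 : p2 ≠ w0) (np2' : p2 ≠ w1) (np3 : p3 ≠ w0) (np3' : p3 ≠ w1)
    (s0 : G.Adj w0 p0 ∨ G.Adj w1 p0) (s1 : G.Adj w0 p1 ∨ G.Adj w1 p1)
    (n2 : ¬ G.Adj w0 p2) (n2' : ¬ G.Adj w1 p2)
    (n3 : ¬ G.Adj w0 p3) (n3' : ¬ G.Adj w1 p3) : False := by
  by_cases A0 : G.Adj w0 p0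
  · by_cases A1 : G.Adj w0 p1
    · exact houseG hHouse hP w0 np0.symm np1.symm np2.symm np3.symm A0 A1 n2 n3
    · have B1 := s1.resolve_left A1
      by_cases B0 : G.Adj w1 p0
      · exact houseG hHouse hP w1 np0'.symm np1'.symm np2'.symm np3'.symm B0 B1 n2' n3'
      · exact LA' hPair hC hP np0 np0' np1 np1' np2 np2' np3 np3' A0 B1 A1 B0
  · have B0 := s0.resolve_left A0
    by_cases B1 : G.Adj w1 p1
    · exact houseG hHouse hP w1 np0'.symm np1'.symm np2'.symm np3'.symm B0 B1 n2' n3'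
    · have A1 := s1.resolve_right B1
      exact LA' hPair hC.symm hP np0' np0 np1' np1 np2' np2 np3' np3 B0 A1 B1 A0

/-- `p1` adjacent to both `w0,w1`: house corner case. -/
lemma LB1 (hHouse : ¬ HasHouse G)
    (hPair : ∀ s t : Set V, IsC4Set G s → IsC4Set G t → s ≠ t → (s ∩ t).Subsingleton)
    (hC : IC4 G w0 w1 w2 w3) {p1 p2 p3 : V}
    (h12 : G.Adj p1 p2) (h23 : G.Adj p2 p3) (h13 : ¬ G.Adj p1 p3) (n13 : p1 ≠ p3)
    (np1 : p1 ≠ w0) (np1' : p1 ≠ w1) (np2 : p2 ≠ w0) (np2' : p2 ≠ w1)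
    (np3 : p3 ≠ w0) (np3' : p3 ≠ w1)
    (n2 : ¬ G.Adj w0 p2) (n2' : ¬ G.Adj w1 p2)
    (A1 : G.Adj w0 p1) (B1 : G.Adj w1 p1)
    (s3 : G.Adj w0 p3 ∨ G.Adj w1 p3) : False := by
  by_cases A3 : G.Adj w0 p3
  · have Q0 : IC4 G w0 p1 p2 p3 := ⟨A1, h12, h23, A3.symm, n2, h13, np2.symm, n13⟩
    by_cases B3 : G.Adj w1 p3
    · have Q1 : IC4 G w1 p1 p2 p3 := ⟨B1, h12, h23, B3.symm, n2', h13, np2'.symm, n13⟩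
      refine pair4 hPair Q0 Q1 p1 p2 mem4b mem4b mem4c mem4c h12.ne ?_
      exact set4_ne (x := w0) mem4l hC.ab.ne np1.symm np2.symm np3.symm
    · exact houseG hHouse Q0 w1 hC.ab.ne' np1'.symm np2'.symm np3'.symm
        hC.ab.symm B1 n2' B3
  · have B3 := s3.resolve_left A3
    have Q1 : IC4 G w1 p1 p2 p3 := ⟨B1, h12, h23, B3.symm, n2', h13, np2'.symm, n13⟩
    exact houseG hHouse Q1 w0 hC.ab.ne np1.symm np2.symm np3.symm hC.ab A1 n2 A3

/-- deep case: `p1,p3` on the `w0` side, `E` strictly on the `w1` side. -/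
lemma LB2 (hPair : ∀ s t : Set V, IsC4Set G s → IsC4Set G t → s ≠ t → (s ∩ t).Subsingleton)
    (hC : IC4 G w0 w1 w2 w3) {p1 p2 p3 E : V}
    (h12 : G.Adj p1 p2) (h23 : G.Adj p2 p3) (h13 : ¬ G.Adj p1 p3) (n13 : p1 ≠ p3)
    (hE1 : G.Adj E p1) (hE2 : ¬ G.Adj E p2) (hE3 : ¬ G.Adj E p3)
    (nE2 : E ≠ p2) (nE3 : E ≠ p3)
    (np1 : p1 ≠ w0) (np1' : p1 ≠ w1) (np2 : p2 ≠ w0) (np2' : p2 ≠ w1)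
    (np3 : p3 ≠ w0) (np3' : p3 ≠ w1) (nE : E ≠ w0) (nE' : E ≠ w1)
    (n2 : ¬ G.Adj w0 p2) (n2' : ¬ G.Adj w1 p2)
    (A1 : G.Adj w0 p1) (nB1 : ¬ G.Adj w1 p1) (A3 : G.Adj w0 p3) (nB3 : ¬ G.Adj w1 p3)
    (BE : G.Adj w1 E) (nAE : ¬ G.Adj w0 E) : False := by
  have Q : IC4 G E w1 w0 p1 :=
    ⟨BE.symm, hC.ab.symm, A1, hE1.symm, fun h => nAE h.symm, nB1, nE, np1'.symm⟩
  by_cases heq : ({E,w1,w0,p1} : Set V) = ({w0,w1,w2,w3} : Set V)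
  · have hE : E = w2 := by
      rcases mem4_cases (heq ▸ (mem4l : E ∈ ({E,w1,w0,p1} : Set V))) with h|h|h|h
      · exact absurd h nE
      · exact absurd h nE'
      · exact h
      · exact absurd (h ▸ BE) hC.bd
    have hp1 : p1 = w3 := by
      rcases mem4_cases (heq ▸ (mem4d : p1 ∈ ({E,w1,w0,p1} : Set V))) with h|h|h|h
      · exact absurd h np1
      · exact absurd h np1'
      · exact absurd (h ▸ hE ▸ hE1.ne') (by simp)
      · exact h
    have R : IC4 G w0 p3 p2 w3 := by
      refine ⟨A3, h23.symm, ?_, hC.da, n2, ?_, np2.symm, ?_⟩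
      · rw [← hp1]; exact h12.symm
      · rw [← hp1]; exact fun h => h13 h.symm
      · rw [← hp1]; exact n13.symm
    refine pair4 hPair R hC w0 w3 mem4l mem4l mem4d mem4d hC.da.ne' ?_
    refine set4_ne (x := p2) mem4c np2 np2' ?_ ?_
    · rw [← hE]; exact nE2.symm
    · rw [← hp1]; exact h12.ne'
  · exact pair4 hPair Q hC w1 w0 mem4b mem4b mem4c mem4l hC.ab.ne' heq

/-- case: contracted vertex is a corner of the house square incident to the apex. -/
lemma LB (hHole : ¬ HasHole G) (hHouse : ¬ HasHouse G)
    (hPair : ∀ s t : Set V, IsC4Set G s → IsC4Set G t → s ≠ t → (s ∩ t).Subsingleton)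
    (hC : IC4 G w0 w1 w2 w3) {p1 p2 p3 E : V}
    (h12 : G.Adj p1 p2) (h23 : G.Adj p2 p3) (h13 : ¬ G.Adj p1 p3) (n13 : p1 ≠ p3)
    (hE1 : G.Adj E p1) (hE2 : ¬ G.Adj E p2) (hE3 : ¬ G.Adj E p3)
    (nE2 : E ≠ p2) (nE3 : E ≠ p3)
    (np1 : p1 ≠ w0) (np1' : p1 ≠ w1) (np2 : p2 ≠ w0) (np2' : p2 ≠ w1)
    (np3 : p3 ≠ w0) (np3' : p3 ≠ w1) (nE : E ≠ w0) (nE' : E ≠ w1)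
    (n2 : ¬ G.Adj w0 p2) (n2' : ¬ G.Adj w1 p2)
    (s1 : G.Adj w0 p1 ∨ G.Adj w1 p1) (s3 : G.Adj w0 p3 ∨ G.Adj w1 p3)
    (sE : G.Adj w0 E ∨ G.Adj w1 E) : False := by
  by_cases A1 : G.Adj w0 p1
  · by_cases B1 : G.Adj w1 p1
    · exact LB1 hHouse hPair hC h12 h23 h13 n13 np1 np1' np2 np2' np3 np3' n2 n2' A1 B1 s3
    · by_cases A3 : G.Adj w0 p3
      · by_cases B3 : G.Adj w1 p3
        · exact LB1 hHouse hPair hC h23.symm h12.symm (fun h => h13 h.symm) n13.symm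
            np3 np3' np2 np2' np1 np1' n2 n2' A3 B3 (Or.inl A1)
        · by_cases AE : G.Adj w0 E
          · have Q0 : IC4 G w0 p1 p2 p3 := ⟨A1, h12, h23, A3.symm, n2, h13, np2.symm, n13⟩
            exact houseG hHouse Q0 E nE hE1.ne nE2 nE3 AE.symm hE1 hE2 hE3
          · exact LB2 hPair hC h12 h23 h13 n13 hE1 hE2 hE3 nE2 nE3 np1 np1' np2 np2'
              np3 np3' nE nE' n2 n2' A1 B1 A3 B3 (sE.resolve_left AE) AE
      · have B3 := s3.resolve_left A3
        exact hole5 hHole w0 p1 p2 p3 w1 A1 h12 h23 B3.symm hC.ab.symm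
          n2 A3 h13 (fun h => B1 h.symm) (fun h => n2' h.symm)
          np2.symm np3.symm n13 np1' np2'
  · have B1 := s1.resolve_left A1
    by_cases B3 : G.Adj w1 p3
    · by_cases A3 : G.Adj w0 p3
      · exact LB1 hHouse hPair hC h23.symm h12.symm (fun h => h13 h.symm) n13.symm
          np3 np3' np2 np2' np1 np1' n2 n2' A3 B3 (Or.inr B1)
      · by_cases BE : G.Adj w1 E
        · have Q1 : IC4 G w1 p1 p2 p3 := ⟨B1, h12, h23, B3.symm, n2', h13, np2'.symm, n13⟩
          exact houseG hHouse Q1 E nE' hE1.ne nE2 nE3 BE.symm hE1 hE2 hE3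
        · exact LB2 hPair hC.symm h12 h23 h13 n13 hE1 hE2 hE3 nE2 nE3 np1' np1 np2' np2
            np3' np3 nE' nE n2' n2 B1 A1 B3 A3 (sE.resolve_right BE) BE
    · have A3 := s3.resolve_right B3
      exact hole5 hHole w1 p1 p2 p3 w0 B1 h12 h23 A3.symm hC.ab
        n2' B3 h13 (fun h => A1 h.symm) (fun h => n2 h.symm)
        np2'.symm np3'.symm n13 np1 np2

/-- case: contracted vertex is a corner of the house square opposite the apex. -/
lemma LC (hHole : ¬ HasHole G) (hHouse : ¬ HasHouse G)
    (hC : IC4 G w0 w1 w2 w3) {m p1 p3 E : V}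
    (hm1 : G.Adj m p1) (hm3 : G.Adj m p3) (hEm : G.Adj E m) (hE1 : G.Adj E p1)
    (h13 : ¬ G.Adj p1 p3) (hE3 : ¬ G.Adj E p3) (n13 : p1 ≠ p3) (nE3 : E ≠ p3)
    (nm : m ≠ w0) (nm' : m ≠ w1) (np1 : p1 ≠ w0) (np1' : p1 ≠ w1)
    (np3 : p3 ≠ w0) (np3' : p3 ≠ w1) (nE : E ≠ w0) (nE' : E ≠ w1)
    (nAm : ¬ G.Adj w0 m) (nBm : ¬ G.Adj w1 m) (nAE : ¬ G.Adj w0 E) (nBE : ¬ G.Adj w1 E)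
    (s1 : G.Adj w0 p1 ∨ G.Adj w1 p1) (s3 : G.Adj w0 p3 ∨ G.Adj w1 p3) : False := by
  by_cases A1 : G.Adj w0 p1
  · by_cases A3 : G.Adj w0 p3
    · have Q : IC4 G p1 m p3 w0 :=
        ⟨hm1.symm, hm3, A3.symm, A1, h13, fun h => nAm h.symm, n13, nm⟩
      exact houseG hHouse Q E hE1.ne hEm.ne nE3 nE hE1 hEm hE3 (fun h => nAE h.symm)
    · have B3 := s3.resolve_left A3
      by_cases B1 : G.Adj w1 p1
      · have Q : IC4 G p1 m p3 w1 :=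
          ⟨hm1.symm, hm3, B3.symm, B1, h13, fun h => nBm h.symm, n13, nm'⟩
        exact houseG hHouse Q E hE1.ne hEm.ne nE3 nE' hE1 hEm hE3 (fun h => nBE h.symm)
      · exact hole5 hHole w1 w0 p1 m p3 hC.ab.symm A1 hm1.symm hm3 B3.symm
          B1 nBm nAm A3 h13
          np1'.symm nm'.symm nm.symm np3.symm n13
  · have B1 := s1.resolve_left A1
    by_cases B3 : G.Adj w1 p3
    · have Q : IC4 G p1 m p3 w1 :=
        ⟨hm1.symm, hm3, B3.symm, B1, h13, fun h => nBm h.symm, n13, nm'⟩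
      exact houseG hHouse Q E hE1.ne hEm.ne nE3 nE' hE1 hEm hE3 (fun h => nBE h.symm)
    · have A3 := s3.resolve_right B3
      exact hole5 hHole w0 w1 p1 m p3 hC.ab B1 hm1.symm hm3 A3.symm
        A1 nAm nBm B3 h13
        np1.symm nm.symm nm'.symm np3'.symm n13

/-- lifting an induced square through the contracted vertex. -/
lemma LD (hHole : ¬ HasHole G) (hC : IC4 G w0 w1 w2 w3) {m1 m2 m3 : V}
    (h12 : G.Adj m1 m2) (h23 : G.Adj m2 m3) (h13 : ¬ G.Adj m1 m3) (n13 : m1 ≠ m3)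
    (nm1 : m1 ≠ w0) (nm1' : m1 ≠ w1) (nm2 : m2 ≠ w0) (nm2' : m2 ≠ w1)
    (nm3 : m3 ≠ w0) (nm3' : m3 ≠ w1)
    (n2 : ¬ G.Adj w0 m2) (n2' : ¬ G.Adj w1 m2)
    (s1 : G.Adj w0 m1 ∨ G.Adj w1 m1) (s3 : G.Adj w0 m3 ∨ G.Adj w1 m3) :
    (G.Adj w0 m1 ∧ G.Adj w0 m3) ∨ (G.Adj w1 m1 ∧ G.Adj w1 m3) := by
  by_cases A1 : G.Adj w0 m1
  · by_cases A3 : G.Adj w0 m3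
    · exact Or.inl ⟨A1, A3⟩
    · have B3 := s3.resolve_left A3
      by_cases B1 : G.Adj w1 m1
      · exact Or.inr ⟨B1, B3⟩
      · exact absurd (hole5 hHole w1 w0 m1 m2 m3 hC.ab.symm A1 h12 h23 B3.symm
          B1 n2' n2 A3 h13
          nm1'.symm nm2'.symm nm2.symm nm3.symm n13) (by simp)
  · have B1 := s1.resolve_left A1
    by_cases B3 : G.Adj w1 m3
    · exact Or.inr ⟨B1, B3⟩
    · have A3 := s3.resolve_right B3
      exact absurd (hole5 hHole w0 w1 m1 m2 m3 hC.ab B1 h12 h23 A3.symm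
        A1 n2 n2' B3 h13
        nm1.symm nm2.symm nm2'.symm nm3'.symm n13) (by simp)

/-- two contracted squares, lifting to opposite sides. -/
lemma LE5 (hHole : ¬ HasHole G) (hHouse : ¬ HasHouse G)
    (hPair : ∀ s t : Set V, IsC4Set G s → IsC4Set G t → s ≠ t → (s ∩ t).Subsingleton)
    (hC : IC4 G w0 w1 w2 w3) {m1 m2 m3 k1 k2 k3 w' : V}
    (hm12 : G.Adj m1 m2) (hm23 : G.Adj m2 m3) (hm13 : ¬ G.Adj m1 m3) (nm13 : m1 ≠ m3)
    (hk12 : G.Adj k1 k2) (hk23 : G.Adj k2 k3) (hk13 : ¬ G.Adj k1 k3) (nk13 : k1 ≠ k3)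
    (nm1 : m1 ≠ w0) (nm1' : m1 ≠ w1) (nm2 : m2 ≠ w0) (nm2' : m2 ≠ w1)
    (nm3 : m3 ≠ w0) (nm3' : m3 ≠ w1)
    (nk1 : k1 ≠ w0) (nk1' : k1 ≠ w1) (nk2 : k2 ≠ w0) (nk2' : k2 ≠ w1)
    (nk3 : k3 ≠ w0) (nk3' : k3 ≠ w1)
    (Am1 : G.Adj w0 m1) (Am3 : G.Adj w0 m3) (nBm : ¬ (G.Adj w1 m1 ∧ G.Adj w1 m3))
    (Bk1 : G.Adj w1 k1) (Bk3 : G.Adj w1 k3) (nAk : ¬ (G.Adj w0 k1 ∧ G.Adj w0 k3))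
    (n2m : ¬ G.Adj w0 m2) (n2m' : ¬ G.Adj w1 m2)
    (n2k : ¬ G.Adj w0 k2) (n2k' : ¬ G.Adj w1 k2)
    (hwm : w' = m1 ∨ w' = m2 ∨ w' = m3) (hwk : w' = k1 ∨ w' = k2 ∨ w' = k3) :
    False := by
  have Sm : IC4 G w0 m1 m2 m3 := ⟨Am1, hm12, hm23, Am3.symm, n2m, hm13, nm2.symm, nm13⟩
  have Sk : IC4 G w1 k1 k2 k3 := ⟨Bk1, hk12, hk23, Bk3.symm, n2k', hk13, nk2'.symm, nk13⟩
  have hmC : ∀ x, (x = m1 ∨ x = m2 ∨ x = m3) → x ≠ w2 ∧ x ≠ w3 := fun x hx =>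
    ⟨fun h => notC hPair hC Sm nm1' nm2' nm3' nm1 nm2 nm3 x hx (Or.inl h),
     fun h => notC hPair hC Sm nm1' nm2' nm3' nm1 nm2 nm3 x hx (Or.inr h)⟩
  rcases hwm with hw|hw|hw
  · -- w' = m1 : adjacent-to-w0 corner
    rcases hwk with hk|hk|hk
    · -- adjacent both : house on Sm with apex w1
      have Bw : G.Adj w1 m1 := by rw [← hw]; rw [hk]; exact Bk1
      have nBm3 : ¬ G.Adj w1 m3 := fun h => nBm ⟨Bw, h⟩
      exact houseG hHouse Sm w1 hC.ab.ne' nm1'.symm nm2'.symm nm3'.symm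
        hC.ab.symm Bw n2m' nBm3
    · exact n2k (by rw [← hk, hw]; exact Am1)
    · have Bw : G.Adj w1 m1 := by rw [← hw]; rw [hk]; exact Bk3
      have nBm3 : ¬ G.Adj w1 m3 := fun h => nBm ⟨Bw, h⟩
      exact houseG hHouse Sm w1 hC.ab.ne' nm1'.symm nm2'.symm nm3'.symm
        hC.ab.symm Bw n2m' nBm3
  · -- w' = m2 : opposite corner on the m side
    rcases hwk with hk|hk|hk
    · exact n2m' (by rw [← hw, hk]; exact Bk1)
    · -- opposite both
      obtain ⟨a, hamem, hAa, haw, nBa⟩ :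
          ∃ a, (a = m1 ∨ a = m3) ∧ G.Adj w0 a ∧ G.Adj a w' ∧ ¬ G.Adj w1 a := by
        by_cases hb : G.Adj w1 m1
        · exact ⟨m3, Or.inr rfl, Am3, by rw [hw]; exact hm23.symm,
            fun h => nBm ⟨hb, h⟩⟩
        · exact ⟨m1, Or.inl rfl, Am1, by rw [hw]; exact hm12, hb⟩
      obtain ⟨c, hcmem, hBc, hwc, nAc⟩ :
          ∃ c, (c = k1 ∨ c = k3) ∧ G.Adj w1 c ∧ G.Adj w' c ∧ ¬ G.Adj w0 c := by
        by_cases hb : G.Adj w0 k1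
        · exact ⟨k3, Or.inr rfl, Bk3, by rw [hk]; exact hk23,
            fun h => nAk ⟨hb, h⟩⟩
        · exact ⟨k1, Or.inl rfl, Bk1, by rw [hk]; exact hk12.symm, hb⟩
      have naw0 : a ≠ w0 := by rcases hamem with rfl|rfl; exacts [nm1, nm3]
      have naw1 : a ≠ w1 := by rcases hamem with rfl|rfl; exacts [nm1', nm3']
      have ncw0 : c ≠ w0 := by rcases hcmem with rfl|rfl; exacts [nk1, nk3]
      have ncw1 : c ≠ w1 := by rcases hcmem with rfl|rfl; exacts [nk1', nk3']
      have nac : a ≠ c := fun h => nBa (by rw [h]; exact hBc)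
      by_cases hadj : G.Adj a c
      · have Q : IC4 G w0 a c w1 :=
          ⟨hAa, hadj, hBc.symm, hC.ab.symm, nAc, fun h => nBa h.symm, ncw0.symm, naw1⟩
        have hamem' : a = m1 ∨ a = m2 ∨ a = m3 := by
          rcases hamem with rfl|rfl
          · exact Or.inl rfl
          · exact Or.inr (Or.inr rfl)
        have haC := hmC a hamem' 
        refine pair4 hPair Q hC w0 w1 mem4l mem4l mem4d mem4b hC.ab.ne ?_
        exact set4_ne (x := a) mem4b naw0 naw1 haC.1 haC.2
      · have nw'0 : ¬ G.Adj w0 w' := by rw [hw]; exact n2m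
        have nw'1 : ¬ G.Adj w1 w' := by rw [hw]; exact n2m'
        exact hole5 hHole w1 w0 a w' c hC.ab.symm hAa haw hwc hBc.symm
          nBa nw'1 nw'0 nAc hadj
          naw1.symm (by rw [hw]; exact nm2'.symm) (by rw [hw]; exact nm2.symm)
          ncw0.symm nac
    · exact n2m' (by rw [← hw, hk]; exact Bk3)
  · -- w' = m3
    rcases hwk with hk|hk|hk
    · have Bw : G.Adj w1 m3 := by rw [← hw, hk]; exact Bk1
      have nBm1 : ¬ G.Adj w1 m1 := fun h => nBm ⟨h, Bw⟩
      exact houseG hHouse Sm.rev w1 hC.ab.ne' nm3'.symm nm2'.symm nm1'.symm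
        hC.ab.symm Bw n2m' nBm1
    · exact n2k (by rw [← hk, hw]; exact Am3)
    · have Bw : G.Adj w1 m3 := by rw [← hw, hk]; exact Bk3
      have nBm1 : ¬ G.Adj w1 m1 := fun h => nBm ⟨h, Bw⟩
      exact houseG hHouse Sm.rev w1 hC.ab.ne' nm3'.symm nm2'.symm nm1'.symm
        hC.ab.symm Bw n2m' nBm1
end main

lemma contract_adj_off (G : SimpleGraph V) (v0 v1 : V) (a b : {x : V // x ≠ v1})
    (ha : a.1 ≠ v0) (hb : b.1 ≠ v0) :
    (contractEdge G v0 v1).Adj a b ↔ G.Adj a.1 b.1 := by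
  unfold contractEdge
  rw [SimpleGraph.fromRel_adj]
  constructor
  · rintro ⟨hne, (h|⟨h1,h2⟩|⟨h1,h2⟩)|(h|⟨h1,h2⟩|⟨h1,h2⟩)⟩
    exacts [h, absurd h1 ha, absurd h1 hb, h.symm, absurd h1 hb, absurd h1 ha]
  · intro h
    exact ⟨fun he => h.ne (congrArg Subtype.val he), Or.inl (Or.inl h)⟩

lemma contract_adj_u (G : SimpleGraph V) (v0 v1 : V) (hv : v0 ≠ v1)
    (b : {x : V // x ≠ v1}) (hb : b.1 ≠ v0) :
    (contractEdge G v0 v1).Adj ⟨v0, hv⟩ b ↔ (G.Adj v0 b.1 ∨ G.Adj v1 b.1) := by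
  unfold contractEdge
  rw [SimpleGraph.fromRel_adj]
  constructor
  · rintro ⟨hne, (h|⟨h1,h2⟩|⟨h1,h2⟩)|(h|⟨h1,h2⟩|⟨h1,h2⟩)⟩
    exacts [Or.inl h, Or.inr h2, absurd h1 hb, Or.inl h.symm, absurd h1 hb, Or.inr h2]
  · intro h
    refine ⟨fun he => hb (congrArg Subtype.val he).symm, ?_⟩
    rcases h with h | h
    · exact Or.inl (Or.inl h)
    · exact Or.inl (Or.inr (Or.inl ⟨rfl, h⟩))

lemma cycle_rot {W : Type*} {Gw : SimpleGraph W} {n : ℕ} {x : ZMod n → W}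
    (h : IsInducedCycle Gw x) (t : ZMod n) : IsInducedCycle Gw (fun i => x (t + i)) := by
  constructor
  · intro i j hij
    exact add_left_cancel (h.1 hij)
  · intro i j
    dsimp only
    rw [h.2 (t + i) (t + j)]
    simp only [add_assoc, add_right_inj]

lemma range_rot {W : Type*} {n : ℕ} (x : ZMod n → W) (t : ZMod n) :
    Set.range (fun i => x (t + i)) = Set.range x := by
  ext w
  constructor
  · rintro ⟨i, rfl⟩; exact ⟨t + i, rfl⟩
  · rintro ⟨i, rfl⟩; exact ⟨i - t, by simp⟩


lemma zfact1 {n : ℕ} (hn : 5 ≤ n) : (1 : ZMod n) ≠ 0 := by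
  haveI : NeZero n := ⟨by omega⟩
  have := (natCast_zmod_eq_iff (n := n) 1 0 (by omega) (by omega))
  simpa using this.not.mpr (by omega)

lemma zfactm {n : ℕ} (hn : 5 ≤ n) : (-1 : ZMod n) ≠ 0 := by
  haveI : NeZero n := ⟨by omega⟩
  rw [← neg_one_eq_cast (by omega : 1 ≤ n)]
  have := (natCast_zmod_eq_iff (n := n) (n-1) 0 (by omega) (by omega))
  simpa using this.not.mpr (by omega)

/-- Almost-chordal graphs are closed under contraction of an edge of an induced 4-cycle
(STATEMENT 9). -/
theorem almost_chordal_closed_under_contraction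
    (G : SimpleGraph V) (hG : AlmostChordal G)
    (f : ZMod 4 → V) (hf : IsInducedCycle G f) :
    AlmostChordal (contractEdge G (f 0) (f 1)) := by
  classical
  obtain ⟨hHole, hHouse, hPair⟩ := hG
  have hC : IC4 G (f 0) (f 1) (f 2) (f 3) := by
    refine ⟨?_, ?_, ?_, ?_, ?_, ?_, ?_, ?_⟩
    · exact (hf.2 0 1).mpr (Or.inl (by decide))
    · exact (hf.2 1 2).mpr (Or.inl (by decide))
    · exact (hf.2 2 3).mpr (Or.inl (by decide))
    · exact (hf.2 3 0).mpr (Or.inl (by decide))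
    · intro h; rcases (hf.2 0 2).mp h with h'|h' <;> revert h' <;> decide
    · intro h; rcases (hf.2 1 3).mp h with h'|h' <;> revert h' <;> decide
    · intro h; have := hf.1 h; revert this; decide
    · intro h; have := hf.1 h; revert this; decide
  have hv01 : f 0 ≠ f 1 := hC.ab.ne
  set H := contractEdge G (f 0) (f 1) with hH
  set u : {x : V // x ≠ f 1} := ⟨f 0, hv01⟩ with hu
  have val_ne : ∀ a : {x : V // x ≠ f 1}, a ≠ u → a.1 ≠ f 0 :=
    fun a h hv => h (Subtype.ext hv)
  have adj_off : ∀ a b : {x : V // x ≠ f 1}, a ≠ u → b ≠ u →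
      (H.Adj a b ↔ G.Adj a.1 b.1) :=
    fun a b ha hb => contract_adj_off G (f 0) (f 1) a b (val_ne a ha) (val_ne b hb)
  have adj_u : ∀ b : {x : V // x ≠ f 1}, b ≠ u →
      (H.Adj u b ↔ (G.Adj (f 0) b.1 ∨ G.Adj (f 1) b.1)) :=
    fun b hb => contract_adj_u G (f 0) (f 1) hv01 b (val_ne b hb)
  have hall4 : ∀ i : ZMod 4, i = 0 ∨ i = 1 ∨ i = 2 ∨ i = 3 := by decide
  refine ⟨?_, ?_, ?_⟩
  · -- no hole in the contraction
    rintro ⟨n, x, hn, hx⟩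
    haveI : NeZero n := ⟨by omega⟩
    by_cases hcase : ∃ i, x i = u
    · obtain ⟨i0, hi0⟩ := hcase
      have hy : IsInducedCycle H (fun i => x (i0 + i)) := cycle_rot hx i0
      set y : ZMod n → {z : V // z ≠ f 1} := fun i => x (i0 + i) with hydef
      have hy0 : y 0 = u := by rw [hydef]; dsimp only; rw [add_zero]; exact hi0
      have hyne : ∀ i : ZMod n, i ≠ 0 → y i ≠ u := fun i hi hh =>
        hi (hy.1 (hh.trans hy0.symm))
      have hyinj : ∀ i j, i ≠ 0 → j ≠ 0 → (y i).1 = (y j).1 → i = j :=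
        fun i j _ _ hh => hy.1 (Subtype.ext hh)
      have hyadj : ∀ i j : ZMod n, i ≠ 0 → j ≠ 0 →
          (G.Adj (y i).1 (y j).1 ↔ (j = i + 1 ∨ i = j + 1)) :=
        fun i j hi hj => (adj_off _ _ (hyne i hi) (hyne j hj)).symm.trans (hy.2 i j)
      have hz1 : (1 : ZMod n) ≠ 0 := zfact1 hn
      have hzm : (-1 : ZMod n) ≠ 0 := zfactm hn
      have hA1 : H.Adj u (y 1) := by
        rw [← hy0]; exact (hy.2 0 1).mpr (Or.inl (zero_add 1).symm)
      have hAm : H.Adj u (y (-1)) := by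
        rw [← hy0]; exact (hy.2 0 (-1)).mpr (Or.inr (neg_add_cancel 1).symm)
      have s1 := (adj_u _ (hyne 1 hz1)).mp hA1
      have sm := (adj_u _ (hyne (-1) hzm)).mp hAm
      have hnon2 : ∀ j : ZMod n, j ≠ 0 → j ≠ 1 → j ≠ -1 →
          ¬ G.Adj (f 0) (y j).1 ∧ ¬ G.Adj (f 1) (y j).1 := by
        intro j h0 h1 hm
        have hnadj : ¬ H.Adj u (y j) := by
          rw [← hy0]
          intro hadj'
          rcases (hy.2 0 j).mp hadj' with hh|hh
          · exact h1 (by rw [hh, zero_add])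
          · exact hm (eq_neg_of_add_eq_zero_left hh.symm)
        rw [adj_u _ (hyne j h0)] at hnadj
        push_neg at hnadj
        exact hnadj
      have hner1f : ∀ i : ZMod n, i ≠ 0 → f 1 ≠ (y i).1 := fun i hi hh => (y i).2 hh.symm
      have hner0f : ∀ i : ZMod n, i ≠ 0 → f 0 ≠ (y i).1 :=
        fun i hi hh => (val_ne (y i) (hyne i hi)) hh.symm
      by_cases c1 : G.Adj (f 0) (y 1).1
      · by_cases cm : G.Adj (f 0) (y (-1)).1
        · exact hHole (hole_subst hn (fun i => (y i).1) (f 0) hyinj hyadj c1 cm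
            (fun j h0 h1 hm => (hnon2 j h0 h1 hm).1) hner0f)
        · have bm := sm.resolve_left cm
          by_cases b1 : G.Adj (f 1) (y 1).1
          · exact hHole (hole_subst hn (fun i => (y i).1) (f 1) hyinj hyadj b1 bm
              (fun j h0 h1 hm => (hnon2 j h0 h1 hm).2) hner1f)
          · refine hHole (hole_split hn (fun i => (y i).1) (f 0) (f 1) hyinj hyadj
              hC.ab c1 bm ?_ ?_ hner0f hner1f)
            · intro j h0 h1
              by_cases hm : j = (-1 : ZMod n)
              · rw [hm]; exact cm
              · exact (hnon2 j h0 h1 hm).1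
            · intro j h0 hm
              by_cases h1 : j = (1 : ZMod n)
              · rw [h1]; exact b1
              · exact (hnon2 j h0 h1 hm).2
      · have b1 := s1.resolve_left c1
        by_cases bm : G.Adj (f 1) (y (-1)).1
        · exact hHole (hole_subst hn (fun i => (y i).1) (f 1) hyinj hyadj b1 bm
            (fun j h0 h1 hm => (hnon2 j h0 h1 hm).2) hner1f)
        · have cm := sm.resolve_right bm
          refine hHole (hole_split hn (fun i => (y i).1) (f 1) (f 0) hyinj hyadj
            hC.ab.symm b1 cm ?_ ?_ hner1f hner0f)
          · intro j h0 h1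
            by_cases hm : j = (-1 : ZMod n)
            · rw [hm]; exact bm
            · exact (hnon2 j h0 h1 hm).2
          · intro j h0 hm
            by_cases h1 : j = (1 : ZMod n)
            · rw [h1]; exact c1
            · exact (hnon2 j h0 h1 hm).1
    · push_neg at hcase
      refine hHole ⟨n, fun i => (x i).1, hn, fun i j hh => hx.1 (Subtype.ext hh),
        fun i j => ?_⟩
      exact (adj_off (x i) (x j) (hcase i) (hcase j)).symm.trans (hx.2 i j)
  · -- no house in the contraction
    rintro ⟨g, e, hgcyc, hne, he0, he1, he2, he3⟩
    have hg01 : H.Adj (g 0) (g 1) := (hgcyc.2 0 1).mpr (Or.inl (by decide))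
    have hg12 : H.Adj (g 1) (g 2) := (hgcyc.2 1 2).mpr (Or.inl (by decide))
    have hg23 : H.Adj (g 2) (g 3) := (hgcyc.2 2 3).mpr (Or.inl (by decide))
    have hg30 : H.Adj (g 3) (g 0) := (hgcyc.2 3 0).mpr (Or.inl (by decide))
    have hg02 : ¬ H.Adj (g 0) (g 2) := fun hh => by
      rcases (hgcyc.2 0 2).mp hh with h'|h' <;> revert h' <;> decide
    have hg13 : ¬ H.Adj (g 1) (g 3) := fun hh => by
      rcases (hgcyc.2 1 3).mp hh with h'|h' <;> revert h' <;> decide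
    have gne : ∀ i j : ZMod 4, i ≠ j → g i ≠ g j := fun i j hij hh => hij (hgcyc.1 hh)
    by_cases hue : e = u
    · have hgu : ∀ i : ZMod 4, g i ≠ u := fun i hh => hne i (hue.trans hh.symm)
      have hP : IC4 G (g 0).1 (g 1).1 (g 2).1 (g 3).1 :=
        ⟨(adj_off _ _ (hgu 0) (hgu 1)).mp hg01,
          (adj_off _ _ (hgu 1) (hgu 2)).mp hg12,
          (adj_off _ _ (hgu 2) (hgu 3)).mp hg23,
          (adj_off _ _ (hgu 3) (hgu 0)).mp hg30,
          fun hh => hg02 ((adj_off _ _ (hgu 0) (hgu 2)).mpr hh),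
          fun hh => hg13 ((adj_off _ _ (hgu 1) (hgu 3)).mpr hh),
          fun hh => gne 0 2 (by decide) (Subtype.ext hh),
          fun hh => gne 1 3 (by decide) (Subtype.ext hh)⟩
      have s0 : G.Adj (f 0) (g 0).1 ∨ G.Adj (f 1) (g 0).1 :=
        (adj_u _ (hgu 0)).mp (hue ▸ he0)
      have s1 : G.Adj (f 0) (g 1).1 ∨ G.Adj (f 1) (g 1).1 :=
        (adj_u _ (hgu 1)).mp (hue ▸ he1)
      have n2 : ¬ G.Adj (f 0) (g 2).1 ∧ ¬ G.Adj (f 1) (g 2).1 := by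
        have hh : ¬ H.Adj u (g 2) := hue ▸ he2
        rw [adj_u _ (hgu 2)] at hh; push_neg at hh; exact hh
      have n3 : ¬ G.Adj (f 0) (g 3).1 ∧ ¬ G.Adj (f 1) (g 3).1 := by
        have hh : ¬ H.Adj u (g 3) := hue ▸ he3
        rw [adj_u _ (hgu 3)] at hh; push_neg at hh; exact hh
      exact LA hHouse hPair hC hP (val_ne _ (hgu 0)) ((g 0).2) (val_ne _ (hgu 1)) ((g 1).2)
        (val_ne _ (hgu 2)) ((g 2).2) (val_ne _ (hgu 3)) ((g 3).2)
        s0 s1 n2.1 n2.2 n3.1 n3.2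
    · by_cases hu0 : g 0 = u
      · have h1u : g 1 ≠ u := fun hh => gne 1 0 (by decide) (hh.trans hu0.symm)
        have h2u : g 2 ≠ u := fun hh => gne 2 0 (by decide) (hh.trans hu0.symm)
        have h3u : g 3 ≠ u := fun hh => gne 3 0 (by decide) (hh.trans hu0.symm)
        have hn2 : ¬ G.Adj (f 0) (g 2).1 ∧ ¬ G.Adj (f 1) (g 2).1 := by
          have hh : ¬ H.Adj u (g 2) := hu0 ▸ hg02
          rw [adj_u _ h2u] at hh; push_neg at hh; exact hh
        exact LB hHole hHouse hPair hC
          ((adj_off _ _ h1u h2u).mp hg12) ((adj_off _ _ h2u h3u).mp hg23)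
          (fun hh => hg13 ((adj_off _ _ h1u h3u).mpr hh))
          (fun hh => gne 1 3 (by decide) (Subtype.ext hh))
          ((adj_off _ _ hue h1u).mp he1)
          (fun hh => he2 ((adj_off _ _ hue h2u).mpr hh))
          (fun hh => he3 ((adj_off _ _ hue h3u).mpr hh))
          (fun hh => hne 2 (Subtype.ext hh)) (fun hh => hne 3 (Subtype.ext hh))
          (val_ne _ h1u) ((g 1).2) (val_ne _ h2u) ((g 2).2) (val_ne _ h3u) ((g 3).2)
          (val_ne _ hue) (e.2)
          hn2.1 hn2.2
          ((adj_u _ h1u).mp (hu0 ▸ hg01))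
          ((adj_u _ h3u).mp (hu0 ▸ hg30.symm))
          ((adj_u _ hue).mp (hu0 ▸ he0.symm))
      · by_cases hu1 : g 1 = u
        · have h0u : g 0 ≠ u := fun hh => gne 0 1 (by decide) (hh.trans hu1.symm)
          have h2u : g 2 ≠ u := fun hh => gne 2 1 (by decide) (hh.trans hu1.symm)
          have h3u : g 3 ≠ u := fun hh => gne 3 1 (by decide) (hh.trans hu1.symm)
          have hn2 : ¬ G.Adj (f 0) (g 3).1 ∧ ¬ G.Adj (f 1) (g 3).1 := by
            have hh : ¬ H.Adj u (g 3) := hu1 ▸ hg13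
            rw [adj_u _ h3u] at hh; push_neg at hh; exact hh
          exact LB hHole hHouse hPair hC
            ((adj_off _ _ h0u h3u).mp hg30.symm) ((adj_off _ _ h3u h2u).mp hg23.symm)
            (fun hh => hg02 ((adj_off _ _ h0u h2u).mpr hh))
            (fun hh => gne 0 2 (by decide) (Subtype.ext hh))
            ((adj_off _ _ hue h0u).mp he0)
            (fun hh => he3 ((adj_off _ _ hue h3u).mpr hh))
            (fun hh => he2 ((adj_off _ _ hue h2u).mpr hh))
            (fun hh => hne 3 (Subtype.ext hh)) (fun hh => hne 2 (Subtype.ext hh))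
            (val_ne _ h0u) ((g 0).2) (val_ne _ h3u) ((g 3).2) (val_ne _ h2u) ((g 2).2)
            (val_ne _ hue) (e.2)
            hn2.1 hn2.2
            ((adj_u _ h0u).mp (hu1 ▸ hg01.symm))
            ((adj_u _ h2u).mp (hu1 ▸ hg12))
            ((adj_u _ hue).mp (hu1 ▸ he1.symm))
        · by_cases hu2 : g 2 = u
          · have h0u : g 0 ≠ u := fun hh => gne 0 2 (by decide) (hh.trans hu2.symm)
            have h1u : g 1 ≠ u := fun hh => gne 1 2 (by decide) (hh.trans hu2.symm)
            have h3u : g 3 ≠ u := fun hh => gne 3 2 (by decide) (hh.trans hu2.symm)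
            have hnm : ¬ G.Adj (f 0) (g 0).1 ∧ ¬ G.Adj (f 1) (g 0).1 := by
              have hh : ¬ H.Adj u (g 0) := hu2 ▸ (fun hh' => hg02 hh'.symm)
              rw [adj_u _ h0u] at hh; push_neg at hh; exact hh
            have hnE : ¬ G.Adj (f 0) e.1 ∧ ¬ G.Adj (f 1) e.1 := by
              have hh : ¬ H.Adj u e := hu2 ▸ (fun hh' => he2 hh'.symm)
              rw [adj_u _ hue] at hh; push_neg at hh; exact hh
            exact LC hHole hHouse hC
              ((adj_off _ _ h0u h1u).mp hg01) ((adj_off _ _ h0u h3u).mp hg30.symm)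
              ((adj_off _ _ hue h0u).mp he0) ((adj_off _ _ hue h1u).mp he1)
              (fun hh => hg13 ((adj_off _ _ h1u h3u).mpr hh))
              (fun hh => he3 ((adj_off _ _ hue h3u).mpr hh))
              (fun hh => gne 1 3 (by decide) (Subtype.ext hh))
              (fun hh => hne 3 (Subtype.ext hh))
              (val_ne _ h0u) ((g 0).2) (val_ne _ h1u) ((g 1).2)
              (val_ne _ h3u) ((g 3).2) (val_ne _ hue) (e.2)
              hnm.1 hnm.2 hnE.1 hnE.2
              ((adj_u _ h1u).mp (hu2 ▸ hg12.symm))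
              ((adj_u _ h3u).mp (hu2 ▸ hg23))
          · by_cases hu3 : g 3 = u
            · have h0u : g 0 ≠ u := fun hh => gne 0 3 (by decide) (hh.trans hu3.symm)
              have h1u : g 1 ≠ u := fun hh => gne 1 3 (by decide) (hh.trans hu3.symm)
              have h2u : g 2 ≠ u := fun hh => gne 2 3 (by decide) (hh.trans hu3.symm)
              have hnm : ¬ G.Adj (f 0) (g 1).1 ∧ ¬ G.Adj (f 1) (g 1).1 := by
                have hh : ¬ H.Adj u (g 1) := hu3 ▸ (fun hh' => hg13 hh'.symm)
                rw [adj_u _ h1u] at hh; push_neg at hh; exact hh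
              have hnE : ¬ G.Adj (f 0) e.1 ∧ ¬ G.Adj (f 1) e.1 := by
                have hh : ¬ H.Adj u e := hu3 ▸ (fun hh' => he3 hh'.symm)
                rw [adj_u _ hue] at hh; push_neg at hh; exact hh
              exact LC hHole hHouse hC
                ((adj_off _ _ h1u h0u).mp hg01.symm) ((adj_off _ _ h1u h2u).mp hg12)
                ((adj_off _ _ hue h1u).mp he1) ((adj_off _ _ hue h0u).mp he0)
                (fun hh => hg02 ((adj_off _ _ h0u h2u).mpr hh))
                (fun hh => he2 ((adj_off _ _ hue h2u).mpr hh))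
                (fun hh => gne 0 2 (by decide) (Subtype.ext hh))
                (fun hh => hne 2 (Subtype.ext hh))
                (val_ne _ h1u) ((g 1).2) (val_ne _ h0u) ((g 0).2)
                (val_ne _ h2u) ((g 2).2) (val_ne _ hue) (e.2)
                hnm.1 hnm.2 hnE.1 hnE.2
                ((adj_u _ h0u).mp (hu3 ▸ hg30))
                ((adj_u _ h2u).mp (hu3 ▸ hg23.symm))
            · have hP : IC4 G (g 0).1 (g 1).1 (g 2).1 (g 3).1 :=
                ⟨(adj_off _ _ hu0 hu1).mp hg01,
                  (adj_off _ _ hu1 hu2).mp hg12,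
                  (adj_off _ _ hu2 hu3).mp hg23,
                  (adj_off _ _ hu3 hu0).mp hg30,
                  fun hh => hg02 ((adj_off _ _ hu0 hu2).mpr hh),
                  fun hh => hg13 ((adj_off _ _ hu1 hu3).mpr hh),
                  fun hh => gne 0 2 (by decide) (Subtype.ext hh),
                  fun hh => gne 1 3 (by decide) (Subtype.ext hh)⟩
              exact houseG hHouse hP e.1
                (fun hh => hne 0 (Subtype.ext hh)) (fun hh => hne 1 (Subtype.ext hh))
                (fun hh => hne 2 (Subtype.ext hh)) (fun hh => hne 3 (Subtype.ext hh))
                ((adj_off _ _ hue hu0).mp he0) ((adj_off _ _ hue hu1).mp he1)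
                (fun hh => he2 ((adj_off _ _ hue hu2).mpr hh))
                (fun hh => he3 ((adj_off _ _ hue hu3).mpr hh))
  · -- two distinct induced squares of the contraction share at most one vertex
    intro s t hs ht hst
    intro x hx y hy
    by_contra hxy
    obtain ⟨g, hgc, rfl⟩ := hs
    obtain ⟨h, hhc, rfl⟩ := ht
    have memval : ∀ (q : ZMod 4 → {z : V // z ≠ f 1}) (z : {z : V // z ≠ f 1}),
        z ∈ Set.range q →
        z.1 ∈ ({(q 0).1, (q 1).1, (q 2).1, (q 3).1} : Set V) := by
      rintro q z ⟨i, rfl⟩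
      rcases hall4 i with rfl|rfl|rfl|rfl
      exacts [mem4l, mem4b, mem4c, mem4d]
    have liftpack : ∀ (q : ZMod 4 → {z : V // z ≠ f 1}) (i0 : ZMod 4),
        IsInducedCycle H q → q i0 = u →
        ∃ m1 m2 m3 : V,
          G.Adj m1 m2 ∧ G.Adj m2 m3 ∧ ¬ G.Adj m1 m3 ∧ m1 ≠ m3 ∧
          (m1 ≠ f 0 ∧ m1 ≠ f 1) ∧ (m2 ≠ f 0 ∧ m2 ≠ f 1) ∧ (m3 ≠ f 0 ∧ m3 ≠ f 1) ∧
          ¬ G.Adj (f 0) m2 ∧ ¬ G.Adj (f 1) m2 ∧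
          ((G.Adj (f 0) m1 ∧ G.Adj (f 0) m3) ∨ (G.Adj (f 1) m1 ∧ G.Adj (f 1) m3)) ∧
          (∀ z, z ∈ Set.range q → z ≠ u → (z.1 = m1 ∨ z.1 = m2 ∨ z.1 = m3)) ∧
          (∀ w : V, (w = m1 ∨ w = m2 ∨ w = m3) →
            ∃ z, z ∈ Set.range q ∧ z ≠ u ∧ z.1 = w) := by
      intro q i0 hqc hqi0
      have hyc : IsInducedCycle H (fun i => q (i0 + i)) := cycle_rot hqc i0
      set yy : ZMod 4 → {z : V // z ≠ f 1} := fun i => q (i0 + i) with hyy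
      have hy0 : yy 0 = u := by rw [hyy]; dsimp only; rw [add_zero]; exact hqi0
      have hyne : ∀ i : ZMod 4, i ≠ 0 → yy i ≠ u := fun i hi hh =>
        hi (hyc.1 (hh.trans hy0.symm))
      have hrange : Set.range yy = Set.range q := range_rot q i0
      have e12 : G.Adj (yy 1).1 (yy 2).1 :=
        (adj_off _ _ (hyne 1 (by decide)) (hyne 2 (by decide))).mp
          ((hyc.2 1 2).mpr (Or.inl (by decide)))
      have e23 : G.Adj (yy 2).1 (yy 3).1 :=
        (adj_off _ _ (hyne 2 (by decide)) (hyne 3 (by decide))).mp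
          ((hyc.2 2 3).mpr (Or.inl (by decide)))
      have e13 : ¬ G.Adj (yy 1).1 (yy 3).1 := fun hh => by
        rcases (hyc.2 1 3).mp
          ((adj_off _ _ (hyne 1 (by decide)) (hyne 3 (by decide))).mpr hh)
          with h'|h' <;> revert h' <;> decide
      have n13 : (yy 1).1 ≠ (yy 3).1 := fun hh => by
        have := hyc.1 (Subtype.ext hh); revert this; decide
      have hn2 : ¬ G.Adj (f 0) (yy 2).1 ∧ ¬ G.Adj (f 1) (yy 2).1 := by
        have hh : ¬ H.Adj u (yy 2) := by
          rw [← hy0]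
          intro hadj'
          rcases (hyc.2 0 2).mp hadj' with h'|h' <;> revert h' <;> decide
        rw [adj_u _ (hyne 2 (by decide))] at hh; push_neg at hh; exact hh
      have hs1 : G.Adj (f 0) (yy 1).1 ∨ G.Adj (f 1) (yy 1).1 :=
        (adj_u _ (hyne 1 (by decide))).mp
          (hy0 ▸ ((hyc.2 0 1).mpr (Or.inl (by decide))))
      have hs3 : G.Adj (f 0) (yy 3).1 ∨ G.Adj (f 1) (yy 3).1 :=
        (adj_u _ (hyne 3 (by decide))).mp
          (hy0 ▸ ((hyc.2 3 0).mpr (Or.inl (by decide))).symm)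
      refine ⟨(yy 1).1, (yy 2).1, (yy 3).1, e12, e23, e13, n13,
        ⟨val_ne _ (hyne 1 (by decide)), (yy 1).2⟩,
        ⟨val_ne _ (hyne 2 (by decide)), (yy 2).2⟩,
        ⟨val_ne _ (hyne 3 (by decide)), (yy 3).2⟩,
        hn2.1, hn2.2, ?_, ?_, ?_⟩
      · exact LD hHole hC e12 e23 e13 n13
          (val_ne _ (hyne 1 (by decide))) ((yy 1).2)
          (val_ne _ (hyne 2 (by decide))) ((yy 2).2)
          (val_ne _ (hyne 3 (by decide))) ((yy 3).2)
          hn2.1 hn2.2 hs1 hs3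
      · intro z hz hzu
        rw [← hrange] at hz
        obtain ⟨i, rfl⟩ := hz
        rcases hall4 i with rfl|rfl|rfl|rfl
        · exact absurd hy0 hzu
        · exact Or.inl rfl
        · exact Or.inr (Or.inl rfl)
        · exact Or.inr (Or.inr rfl)
      · intro w hw
        rcases hw with rfl|rfl|rfl
        · exact ⟨yy 1, hrange ▸ ⟨1, rfl⟩, hyne 1 (by decide), rfl⟩
        · exact ⟨yy 2, hrange ▸ ⟨2, rfl⟩, hyne 2 (by decide), rfl⟩
        · exact ⟨yy 3, hrange ▸ ⟨3, rfl⟩, hyne 3 (by decide), rfl⟩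
    have offIC4 : ∀ (q : ZMod 4 → {z : V // z ≠ f 1}), IsInducedCycle H q →
        (∀ i, q i ≠ u) → IC4 G (q 0).1 (q 1).1 (q 2).1 (q 3).1 := by
      intro q hqc hqu
      have qne : ∀ i j : ZMod 4, i ≠ j → q i ≠ q j := fun i j hij hh => hij (hqc.1 hh)
      exact ⟨(adj_off _ _ (hqu 0) (hqu 1)).mp ((hqc.2 0 1).mpr (Or.inl (by decide))),
        (adj_off _ _ (hqu 1) (hqu 2)).mp ((hqc.2 1 2).mpr (Or.inl (by decide))),
        (adj_off _ _ (hqu 2) (hqu 3)).mp ((hqc.2 2 3).mpr (Or.inl (by decide))),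
        (adj_off _ _ (hqu 3) (hqu 0)).mp ((hqc.2 3 0).mpr (Or.inl (by decide))),
        fun hh => (by rcases (hqc.2 0 2).mp ((adj_off _ _ (hqu 0) (hqu 2)).mpr hh)
          with h'|h' <;> revert h' <;> decide),
        fun hh => (by rcases (hqc.2 1 3).mp ((adj_off _ _ (hqu 1) (hqu 3)).mpr hh)
          with h'|h' <;> revert h' <;> decide),
        fun hh => qne 0 2 (by decide) (Subtype.ext hh),
        fun hh => qne 1 3 (by decide) (Subtype.ext hh)⟩
    by_cases hgu : ∃ i, g i = u
    · obtain ⟨ig, hig⟩ := hgu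
      obtain ⟨m1, m2, m3, hm12, hm23, hm13, nm13, hm1f, hm2f, hm3f, nAm2, nBm2,
        hmLD, hmfwd, hmbwd⟩ := liftpack g ig hgc hig
      by_cases hhu : ∃ i, h i = u
      · obtain ⟨ih, hih⟩ := hhu
        obtain ⟨k1, k2, k3, hk12, hk23, hk13, nk13, hk1f, hk2f, hk3f, nAk2, nBk2,
          hkLD, hkfwd, hkbwd⟩ := liftpack h ih hhc hih
        obtain ⟨w, hws, hwt, hwu⟩ :
            ∃ w : {z : V // z ≠ f 1}, w ∈ Set.range g ∧ w ∈ Set.range h ∧ w ≠ u := by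
          by_cases hxu : x = u
          · exact ⟨y, hy.1, hy.2, fun hyu => hxy (hxu.trans hyu.symm)⟩
          · exact ⟨x, hx.1, hx.2, hxu⟩
        have hwm := hmfwd w hws hwu
        have hwk := hkfwd w hwt hwu
        have same : ∀ r : V, (r = f 0 ∨ r = f 1) → G.Adj r m1 → G.Adj r m3 →
            G.Adj r k1 → G.Adj r k3 → ¬ G.Adj r m2 → ¬ G.Adj r k2 → False := by
          intro r hr rm1 rm3 rk1 rk3 nrm2 nrk2
          have hrm : ∀ w' : V, (w' = m1 ∨ w' = m2 ∨ w' = m3) → r ≠ w' := by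
            intro w' hw'
            rcases hr with rfl|rfl <;> rcases hw' with rfl|rfl|rfl
            exacts [hm1f.1.symm, hm2f.1.symm, hm3f.1.symm,
              hm1f.2.symm, hm2f.2.symm, hm3f.2.symm]
          have hrk : ∀ w' : V, (w' = k1 ∨ w' = k2 ∨ w' = k3) → r ≠ w' := by
            intro w' hw'
            rcases hr with rfl|rfl <;> rcases hw' with rfl|rfl|rfl
            exacts [hk1f.1.symm, hk2f.1.symm, hk3f.1.symm,
              hk1f.2.symm, hk2f.2.symm, hk3f.2.symm]
          have Sm : IC4 G r m1 m2 m3 :=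
            ⟨rm1, hm12, hm23, rm3.symm, nrm2, hm13, hrm m2 (Or.inr (Or.inl rfl)), nm13⟩
          have Sk : IC4 G r k1 k2 k3 :=
            ⟨rk1, hk12, hk23, rk3.symm, nrk2, hk13, hrk k2 (Or.inr (Or.inl rfl)), nk13⟩
          have hSne : ({r, m1, m2, m3} : Set V) ≠ ({r, k1, k2, k3} : Set V) := by
            intro hEq
            apply hst
            apply Set.Subset.antisymm
            · intro z hz
              by_cases hzu : z = u
              · rw [hzu]; exact ⟨ih, hih⟩
              · have hzm := hmfwd z hz hzu
                have hz' : z.1 ∈ ({r, k1, k2, k3} : Set V) := hEq ▸ mem4_of (Or.inr hzm)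
                rcases mem4_cases hz' with h'|h'|h'|h'
                · exact absurd h'.symm (hrm z.1 hzm)
                · obtain ⟨z', hz'r, _, hz'v⟩ := hkbwd z.1 (Or.inl h')
                  exact (Subtype.ext hz'v : z' = z) ▸ hz'r
                · obtain ⟨z', hz'r, _, hz'v⟩ := hkbwd z.1 (Or.inr (Or.inl h'))
                  exact (Subtype.ext hz'v : z' = z) ▸ hz'r
                · obtain ⟨z', hz'r, _, hz'v⟩ := hkbwd z.1 (Or.inr (Or.inr h'))
                  exact (Subtype.ext hz'v : z' = z) ▸ hz'r
            · intro z hz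
              by_cases hzu : z = u
              · rw [hzu]; exact ⟨ig, hig⟩
              · have hzk := hkfwd z hz hzu
                have hz' : z.1 ∈ ({r, m1, m2, m3} : Set V) :=
                  hEq.symm ▸ mem4_of (Or.inr hzk)
                rcases mem4_cases hz' with h'|h'|h'|h'
                · exact absurd h'.symm (hrk z.1 hzk)
                · obtain ⟨z', hz'r, _, hz'v⟩ := hmbwd z.1 (Or.inl h')
                  exact (Subtype.ext hz'v : z' = z) ▸ hz'r
                · obtain ⟨z', hz'r, _, hz'v⟩ := hmbwd z.1 (Or.inr (Or.inl h'))
                  exact (Subtype.ext hz'v : z' = z) ▸ hz'r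
                · obtain ⟨z', hz'r, _, hz'v⟩ := hmbwd z.1 (Or.inr (Or.inr h'))
                  exact (Subtype.ext hz'v : z' = z) ▸ hz'r
          exact (hrm w.1 hwm) (hPair _ _ Sm.c4set Sk.c4set hSne ⟨mem4l, mem4l⟩
            ⟨mem4_of (Or.inr hwm), mem4_of (Or.inr hwk)⟩)
        rcases hmLD with ⟨Am1, Am3⟩ | ⟨Bm1, Bm3⟩ <;>
          rcases hkLD with ⟨Ak1, Ak3⟩ | ⟨Bk1, Bk3⟩
        · exact same (f 0) (Or.inl rfl) Am1 Am3 Ak1 Ak3 nAm2 nAk2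
        · by_cases hBm : G.Adj (f 1) m1 ∧ G.Adj (f 1) m3
          · exact same (f 1) (Or.inr rfl) hBm.1 hBm.2 Bk1 Bk3 nBm2 nBk2
          · by_cases hAk : G.Adj (f 0) k1 ∧ G.Adj (f 0) k3
            · exact same (f 0) (Or.inl rfl) Am1 Am3 hAk.1 hAk.2 nAm2 nAk2
            · exact LE5 hHole hHouse hPair hC hm12 hm23 hm13 nm13 hk12 hk23 hk13 nk13
                hm1f.1 hm1f.2 hm2f.1 hm2f.2 hm3f.1 hm3f.2
                hk1f.1 hk1f.2 hk2f.1 hk2f.2 hk3f.1 hk3f.2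
                Am1 Am3 hBm Bk1 Bk3 hAk nAm2 nBm2 nAk2 nBk2 hwm hwk
        · by_cases hAm : G.Adj (f 0) m1 ∧ G.Adj (f 0) m3
          · exact same (f 0) (Or.inl rfl) hAm.1 hAm.2 Ak1 Ak3 nAm2 nAk2
          · by_cases hBk : G.Adj (f 1) k1 ∧ G.Adj (f 1) k3
            · exact same (f 1) (Or.inr rfl) Bm1 Bm3 hBk.1 hBk.2 nBm2 nBk2
            · exact LE5 hHole hHouse hPair hC.symm hm12 hm23 hm13 nm13 hk12 hk23 hk13 nk13
                hm1f.2 hm1f.1 hm2f.2 hm2f.1 hm3f.2 hm3f.1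
                hk1f.2 hk1f.1 hk2f.2 hk2f.1 hk3f.2 hk3f.1
                Bm1 Bm3 hAm Ak1 Ak3 hBk nBm2 nAm2 nBk2 nAk2 hwm hwk
        · exact same (f 1) (Or.inr rfl) Bm1 Bm3 Bk1 Bk3 nBm2 nBk2
      · push_neg at hhu
        have hT := offIC4 h hhc hhu
        obtain ⟨r, hr01, rm1, rm3, nrm2⟩ :
            ∃ r : V, (r = f 0 ∨ r = f 1) ∧ G.Adj r m1 ∧ G.Adj r m3 ∧ ¬ G.Adj r m2 := by
          rcases hmLD with ⟨a1, a3⟩ | ⟨b1, b3⟩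
          · exact ⟨f 0, Or.inl rfl, a1, a3, nAm2⟩
          · exact ⟨f 1, Or.inr rfl, b1, b3, nBm2⟩
        have hrm : ∀ w' : V, (w' = m1 ∨ w' = m2 ∨ w' = m3) → r ≠ w' := by
          intro w' hw'
          rcases hr01 with rfl|rfl <;> rcases hw' with rfl|rfl|rfl
          exacts [hm1f.1.symm, hm2f.1.symm, hm3f.1.symm,
            hm1f.2.symm, hm2f.2.symm, hm3f.2.symm]
        have Sm : IC4 G r m1 m2 m3 :=
          ⟨rm1, hm12, hm23, rm3.symm, nrm2, hm13, hrm m2 (Or.inr (Or.inl rfl)), nm13⟩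
        have hxu : x ≠ u := fun hh => by
          obtain ⟨i, hi⟩ := hx.2; exact hhu i (hi.trans hh)
        have hyu : y ≠ u := fun hh => by
          obtain ⟨i, hi⟩ := hy.2; exact hhu i (hi.trans hh)
        have hrT : ∀ i : ZMod 4, r ≠ (h i).1 := by
          intro i
          rcases hr01 with rfl|rfl
          · exact fun hh => val_ne (h i) (hhu i) hh.symm
          · exact fun hh => (h i).2 hh.symm
        have hSne : ({r, m1, m2, m3} : Set V) ≠
            ({(h 0).1, (h 1).1, (h 2).1, (h 3).1} : Set V) :=
          set4_ne (x := r) mem4l (hrT 0) (hrT 1) (hrT 2) (hrT 3)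
        exact hxy (Subtype.ext (hPair _ _ Sm.c4set hT.c4set hSne
          ⟨mem4_of (Or.inr (hmfwd x hx.1 hxu)), memval h x hx.2⟩
          ⟨mem4_of (Or.inr (hmfwd y hy.1 hyu)), memval h y hy.2⟩))
    · push_neg at hgu
      have hS := offIC4 g hgc hgu
      by_cases hhu : ∃ i, h i = u
      · obtain ⟨ih, hih⟩ := hhu
        obtain ⟨k1, k2, k3, hk12, hk23, hk13, nk13, hk1f, hk2f, hk3f, nAk2, nBk2,
          hkLD, hkfwd, hkbwd⟩ := liftpack h ih hhc hih
        obtain ⟨r, hr01, rk1, rk3, nrk2⟩ :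
            ∃ r : V, (r = f 0 ∨ r = f 1) ∧ G.Adj r k1 ∧ G.Adj r k3 ∧ ¬ G.Adj r k2 := by
          rcases hkLD with ⟨a1, a3⟩ | ⟨b1, b3⟩
          · exact ⟨f 0, Or.inl rfl, a1, a3, nAk2⟩
          · exact ⟨f 1, Or.inr rfl, b1, b3, nBk2⟩
        have hrk : ∀ w' : V, (w' = k1 ∨ w' = k2 ∨ w' = k3) → r ≠ w' := by
          intro w' hw'
          rcases hr01 with rfl|rfl <;> rcases hw' with rfl|rfl|rfl
          exacts [hk1f.1.symm, hk2f.1.symm, hk3f.1.symm,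
            hk1f.2.symm, hk2f.2.symm, hk3f.2.symm]
        have Sk : IC4 G r k1 k2 k3 :=
          ⟨rk1, hk12, hk23, rk3.symm, nrk2, hk13, hrk k2 (Or.inr (Or.inl rfl)), nk13⟩
        have hxu : x ≠ u := fun hh => by
          obtain ⟨i, hi⟩ := hx.1; exact hgu i (hi.trans hh)
        have hyu : y ≠ u := fun hh => by
          obtain ⟨i, hi⟩ := hy.1; exact hgu i (hi.trans hh)
        have hrS : ∀ i : ZMod 4, r ≠ (g i).1 := by
          intro i
          rcases hr01 with rfl|rfl
          · exact fun hh => val_ne (g i) (hgu i) hh.symm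
          · exact fun hh => (g i).2 hh.symm
        have hSne : ({(g 0).1, (g 1).1, (g 2).1, (g 3).1} : Set V) ≠
            ({r, k1, k2, k3} : Set V) :=
          set4_ne' (x := r) mem4l (hrS 0) (hrS 1) (hrS 2) (hrS 3)
        exact hxy (Subtype.ext (hPair _ _ hS.c4set Sk.c4set hSne
          ⟨memval g x hx.1, mem4_of (Or.inr (hkfwd x hx.2 hxu))⟩
          ⟨memval g y hy.1, mem4_of (Or.inr (hkfwd y hy.2 hyu))⟩))
      · push_neg at hhu
        have hT := offIC4 h hhc hhu
        have imgeq : ∀ (q : ZMod 4 → {z : V // z ≠ f 1}),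
            ({(q 0).1, (q 1).1, (q 2).1, (q 3).1} : Set V) =
              Subtype.val '' Set.range q := by
          intro q
          ext z
          constructor
          · intro hz
            rcases mem4_cases hz with rfl|rfl|rfl|rfl
            exacts [⟨q 0, ⟨0, rfl⟩, rfl⟩, ⟨q 1, ⟨1, rfl⟩, rfl⟩,
              ⟨q 2, ⟨2, rfl⟩, rfl⟩, ⟨q 3, ⟨3, rfl⟩, rfl⟩]
          · rintro ⟨w', ⟨i, rfl⟩, rfl⟩
            rcases hall4 i with rfl|rfl|rfl|rfl
            exacts [mem4l, mem4b, mem4c, mem4d]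
        have hSne : ({(g 0).1, (g 1).1, (g 2).1, (g 3).1} : Set V) ≠
            ({(h 0).1, (h 1).1, (h 2).1, (h 3).1} : Set V) := by
          intro hEq
          apply hst
          apply Set.image_injective.mpr Subtype.val_injective
          rw [← imgeq g, ← imgeq h]
          exact hEq
        exact hxy (Subtype.ext (hPair _ _ hS.c4set hT.c4set hSne
          ⟨memval g x hx.1, memval h x hx.2⟩ ⟨memval g y hy.1, memval h y hy.2⟩))
end
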